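/- arXiv:math/0404011 — 12 statements merged into one kernel-verified Lean document; each statement's English description precedes it below -/
import Mathlib

section
/- For all real numbers X ≥ 0 and Y ≥ 0, X^6 + Y^6 + 9·X^4·Y^2 + 9·X^2·Y^4 + 6·X^5·Y + 6·X·Y^5 + 18·X^3·Y^3 ≤ (25/4)·(X^2 + Y^2)^3, with equality if and only if X = Y. -/
/-!
The defect `25 (X² + Y²)³ - 4·(left-hand side)` factors as `3 (X - Y)² Q(X, Y)` with
`Q = 4 (X² + Y²)² + 3 (X² + XY + Y²)² + (XY)²`, a sum of squares vanishing only at the origin;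
so the defect is nonnegative and vanishes exactly on the diagonal `X = Y`.
-/

section CommRing

variable {R : Type*} [CommRing R]

theorem sextic_defect_eq_mul_sum_sq (X Y : R) :
    25 * (X^2 + Y^2)^3 -
        4 * (X^6 + Y^6 + 9*X^4*Y^2 + 9*X^2*Y^4 + 6*X^5*Y + 6*X*Y^5 + 18*X^3*Y^3) =
      3 * (X - Y)^2 * (4 * (X^2 + Y^2)^2 + 3 * (X^2 + X*Y + Y^2)^2 + (X*Y)^2) := by
  ring

end CommRing

section LinearOrderedField

variable {K : Type*} [Field K] [LinearOrder K] [IsStrictOrderedRing K]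

theorem eq_zero_of_sum_sq_quartic_eq_zero {X Y : K}
    (h : 4 * (X^2 + Y^2)^2 + 3 * (X^2 + X*Y + Y^2)^2 + (X*Y)^2 = 0) : X = 0 ∧ Y = 0 := by
  have hsq : (X^2 + Y^2)^2 = 0 := by nlinarith [sq_nonneg (X^2 + X*Y + Y^2), sq_nonneg (X*Y)]
  have hsum : X * X + Y * Y = 0 := by simpa only [sq] using pow_eq_zero_iff two_ne_zero |>.mp hsq
  exact mul_self_add_mul_self_eq_zero.mp hsum

theorem sextic_le (X Y : K) :
    X^6 + Y^6 + 9*X^4*Y^2 + 9*X^2*Y^4 + 6*X^5*Y + 6*X*Y^5 + 18*X^3*Y^3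
      ≤ (25/4) * (X^2 + Y^2)^3 := by
  have hdefect := sextic_defect_eq_mul_sum_sq X Y
  have hnonneg :
      0 ≤ 3 * (X - Y)^2 * (4 * (X^2 + Y^2)^2 + 3 * (X^2 + X*Y + Y^2)^2 + (X*Y)^2) := by
    positivity
  linarith

theorem sextic_eq_iff (X Y : K) :
    X^6 + Y^6 + 9*X^4*Y^2 + 9*X^2*Y^4 + 6*X^5*Y + 6*X*Y^5 + 18*X^3*Y^3
      = (25/4) * (X^2 + Y^2)^3 ↔ X = Y := by
  refine ⟨fun h => ?_, fun h => by subst h; ring⟩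
  have hprod : 3 * (X - Y)^2 * (4 * (X^2 + Y^2)^2 + 3 * (X^2 + X*Y + Y^2)^2 + (X*Y)^2) = 0 := by
    rw [← sextic_defect_eq_mul_sum_sq, h]; ring
  rcases mul_eq_zero.mp hprod with hdiag | hquartic
  · exact sub_eq_zero.mp (pow_eq_zero_iff two_ne_zero |>.mp
      ((mul_eq_zero.mp hdiag).resolve_left three_ne_zero))
  · obtain ⟨rfl, rfl⟩ := eq_zero_of_sum_sq_quartic_eq_zero hquartic
    rfl

end LinearOrderedField

theorem sharp_sextic_inequality_general (X Y : ℝ) :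
    X^6 + Y^6 + 9*X^4*Y^2 + 9*X^2*Y^4 + 6*X^5*Y + 6*X*Y^5 + 18*X^3*Y^3
      ≤ (25/4) * (X^2 + Y^2)^3 ∧
    (X^6 + Y^6 + 9*X^4*Y^2 + 9*X^2*Y^4 + 6*X^5*Y + 6*X*Y^5 + 18*X^3*Y^3
      = (25/4) * (X^2 + Y^2)^3 ↔ X = Y) :=
  ⟨sextic_le X Y, sextic_eq_iff X Y⟩

theorem sharp_sextic_inequality (X Y : ℝ) (hX : 0 ≤ X) (hY : 0 ≤ Y) :
    X^6 + Y^6 + 9*X^4*Y^2 + 9*X^2*Y^4 + 6*X^5*Y + 6*X*Y^5 + 18*X^3*Y^3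
      ≤ (25/4) * (X^2 + Y^2)^3 ∧
    (X^6 + Y^6 + 9*X^4*Y^2 + 9*X^2*Y^4 + 6*X^5*Y + 6*X*Y^5 + 18*X^3*Y^3
      = (25/4) * (X^2 + Y^2)^3 ↔ X = Y) :=
  sharp_sextic_inequality_general X Y
end

section
/- Let f : ℝ → ℂ and F be continuous functions satisfying f(x)·f(y)·f(z) = F(x² + y² + z², x + y + z) for all real x, y, z. If f vanishes at some point, then f vanishes identically. -/
/-!
If `f x₀ = 0` and `(z - x₀) (z - (4x - 3x₀)) ≥ 0`, the triple `(x, x, z)` has the same sum and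
sum of squares as a triple `(x₀, y, w)`, so the functional equation gives `f x ^ 2 f z = 0`.
Hence a nonzero value `f b` forces `f` to vanish far to the right, so the (open) support of `f`
is bounded above and its supremum `a` is a zero. Applying the same identity with the zero `a`,
a point `x` of the support close to `a`, and `z = b` contradicts `f b ≠ 0`.
-/

open Function

theorem IsOpen.csSup_notMem {α : Type*} [ConditionallyCompleteLinearOrder α] [TopologicalSpace α]
    [OrderTopology α] [NoMaxOrder α] [DenselyOrdered α] {s : Set α} (hs : IsOpen s)
    (hbdd : BddAbove s) : sSup s ∉ s := by
  intro hmem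
  obtain ⟨u, hu, hIco⟩ := exists_Ico_subset_of_mem_nhds (hs.mem_nhds hmem) (exists_gt _)
  obtain ⟨c, hc, hcu⟩ := exists_between hu
  exact (le_csSup hbdd (hIco ⟨hc.le, hcu⟩)).not_gt hc

/-- The two constraints prescribe `y + w` and `(y - w) ^ 2`; the latter comes out as
`(z - x₀) (z - (4x - 3x₀))`. -/
theorem exists_triple_eq_add_and_sq_add (x₀ x z : ℝ) (h : 0 ≤ (z - x₀) * (z - (4 * x - 3 * x₀))) :
    ∃ y w : ℝ, x₀ + y + w = x + x + z ∧ x₀ ^ 2 + y ^ 2 + w ^ 2 = x ^ 2 + x ^ 2 + z ^ 2 := by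
  set r := √((z - x₀) * (z - (4 * x - 3 * x₀)) / 4)
  have hr : r ^ 2 = (z - x₀) * (z - (4 * x - 3 * x₀)) / 4 := Real.sq_sqrt (by positivity)
  refine ⟨(2 * x + z - x₀) / 2 + r, (2 * x + z - x₀) / 2 - r, by ring, ?_⟩
  linear_combination 2 * hr

section

variable {f : ℝ → ℂ} {F : ℝ × ℝ → ℂ}

theorem eq_zero_or_eq_zero_of_discr_nonneg
    (heq : ∀ x y z : ℝ, f x * f y * f z = F (x ^ 2 + y ^ 2 + z ^ 2, x + y + z))
    {x₀ x z : ℝ} (h₀ : f x₀ = 0) (h : 0 ≤ (z - x₀) * (z - (4 * x - 3 * x₀))) :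
    f x = 0 ∨ f z = 0 := by
  obtain ⟨y, w, hsum, hsq⟩ := exists_triple_eq_add_and_sq_add x₀ x z h
  have hxxz : f x * f x * f z = 0 := by rw [heq, ← hsum, ← hsq, ← heq, h₀, zero_mul, zero_mul]
  simpa only [mul_eq_zero, or_self] using hxxz

theorem bddAbove_support_of_eq_zero
    (heq : ∀ x y z : ℝ, f x * f y * f z = F (x ^ 2 + y ^ 2 + z ^ 2, x + y + z))
    {x₀ b : ℝ} (h₀ : f x₀ = 0) (hb : f b ≠ 0) : BddAbove (support f) := by
  refine ⟨max (4 * b - 3 * x₀) x₀, fun y hy => ?_⟩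
  by_contra! hgt
  obtain ⟨hby, hx₀y⟩ := max_lt_iff.mp hgt
  have h : 0 ≤ (y - x₀) * (y - (4 * b - 3 * x₀)) := mul_nonneg (by linarith) (by linarith)
  exact (eq_zero_or_eq_zero_of_discr_nonneg heq h₀ h).elim hb hy

end

theorem cubic_functional_equation_vanishing_general
    (f : ℝ → ℂ) (F : ℝ × ℝ → ℂ)
    (hf : Continuous f)
    (heq : ∀ x y z : ℝ, f x * f y * f z = F (x^2 + y^2 + z^2, x + y + z))
    (hvan : ∃ x₀ : ℝ, f x₀ = 0) :
    ∀ x : ℝ, f x = 0 := by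
  intro b
  by_contra hb
  obtain ⟨x₀, hx₀⟩ := hvan
  have hbdd := bddAbove_support_of_eq_zero heq hx₀ hb
  set a := sSup (support f)
  have ha : f a = 0 := notMem_support.mp (hf.isOpen_support.csSup_notMem hbdd)
  have hba : b < a := (le_csSup hbdd hb).lt_of_ne (by rintro rfl; exact hb ha)
  obtain ⟨x, hx, hxa⟩ := exists_lt_of_lt_csSup ⟨b, hb⟩ (show a - (a - b) / 4 < a by linarith)
  have h : 0 ≤ (b - a) * (b - (4 * x - 3 * a)) :=
    mul_nonneg_of_nonpos_of_nonpos (by linarith) (by linarith)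
  exact (eq_zero_or_eq_zero_of_discr_nonneg heq ha h).elim hx hb

theorem cubic_functional_equation_vanishing
    (f : ℝ → ℂ) (F : ℝ × ℝ → ℂ)
    (hf : Continuous f)
    (hF : ContinuousOn F {p : ℝ × ℝ | p.2^2 ≤ 3 * p.1})
    (heq : ∀ x y z : ℝ, f x * f y * f z = F (x^2 + y^2 + z^2, x + y + z))
    (hvan : ∃ x₀ : ℝ, f x₀ = 0) :
    ∀ x : ℝ, f x = 0 :=
  cubic_functional_equation_vanishing_general f F hf heq hvan
end

section
/- Let f : ℝ → ℂ and F be non-trivial continuous functions satisfying f(x)·f(y)·f(z) = F(x² + y² + z², x + y + z) for all x, y, z ∈ ℝ. Then there exist complex constants A, B, C such that f(x) = exp(A·x² + B·x + C) for all x ∈ ℝ. -/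
open Complex


lemma aux_discrete {X : Type*} [TopologicalSpace X] {s : Set X} (hs : IsPreconnected s)
    {φ : X → ℂ} (hφ : ContinuousOn φ s) (h1 : ∀ t ∈ s, Complex.exp (φ t) = 1)
    {t₀ : X} (ht₀ : t₀ ∈ s) (h0 : φ t₀ = 0) : ∀ t ∈ s, φ t = 0 := by
  set ψ : X → ℝ := fun t => ((φ t) / (2 * Real.pi * Complex.I)).re with hψ
  have hw : (2 * (Real.pi:ℂ) * Complex.I) ≠ 0 := by
    simp [Real.pi_ne_zero, Complex.I_ne_zero]
  have hint : ∀ t ∈ s, ∃ n : ℤ, ψ t = n ∧ φ t = n * (2 * Real.pi * Complex.I) := by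
    intro t ht
    obtain ⟨n, hn⟩ := Complex.exp_eq_one_iff.mp (h1 t ht)
    refine ⟨n, ?_, hn⟩
    simp [hψ, hn, mul_div_assoc, div_self hw]
  have hψc : ContinuousOn ψ s := (Complex.continuous_re.comp_continuousOn (hφ.div_const _))
  have hψ0 : ψ t₀ = 0 := by simp [hψ, h0]
  intro t ht
  obtain ⟨n, hn1, hn2⟩ := hint t ht
  have hn0 : (n:ℝ) = 0 := by
    by_contra hne
    have himg : IsPreconnected (ψ '' s) := hs.image ψ hψc
    have h0m : (0:ℝ) ∈ ψ '' s := ⟨t₀, ht₀, hψ0⟩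
    have hnm : (n:ℝ) ∈ ψ '' s := ⟨t, ht, hn1⟩
    -- find a half-integer value in between
    have key : ∀ r ∈ ψ '' s, ∃ m : ℤ, r = m := by
      rintro r ⟨u, hu, rfl⟩
      obtain ⟨m, hm, -⟩ := hint u hu
      exact ⟨m, hm⟩
    rcases lt_or_gt_of_ne hne with hlt | hgt
    · have h12 : -(1/2 : ℝ) ∈ ψ '' s := by
        apply himg.Icc_subset hnm h0m
        constructor
        · have hn' : n < 0 := by exact_mod_cast hlt
          have : (n:ℝ) ≤ -1 := by exact_mod_cast (by omega : n ≤ -1)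
          linarith
        · linarith
      obtain ⟨m, hm⟩ := key _ h12
      have : (2*m : ℤ) = -1 := by
        have : (2*(m:ℝ)) = -1 := by rw [← hm]; ring
        exact_mod_cast this
      omega
    · have h12 : (1/2 : ℝ) ∈ ψ '' s := by
        apply himg.Icc_subset h0m hnm
        constructor
        · linarith
        · have hn' : 0 < n := by exact_mod_cast hgt
          have : (1:ℝ) ≤ (n:ℝ) := by exact_mod_cast (by omega : 1 ≤ n)
          linarith
      obtain ⟨m, hm⟩ := key _ h12
      have : (2*m : ℤ) = 1 := by
        have : (2*(m:ℝ)) = 1 := by rw [← hm]; ring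
        exact_mod_cast this
      omega
  rw [hn2]
  have : (n:ℂ) = 0 := by exact_mod_cast hn0
  rw [this, zero_mul]

lemma quad_of_par {L : ℝ → ℂ} (hL : Continuous L) (h0 : L 0 = 0)
    (hpar : ∀ h k : ℝ, L (h+k) + L (h-k) = 2 * L h + 2 * L k) :
    ∀ t : ℝ, L t = (t:ℂ)^2 * L 1 := by
  have heven : ∀ t : ℝ, L (-t) = L t := by
    intro t
    have := hpar 0 t
    simp only [zero_add, zero_sub] at this
    rw [h0] at this
    linear_combination this
  have hnat : ∀ (n : ℕ) (t : ℝ), L (n * t) = (n:ℂ)^2 * L t := by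
    intro n t
    induction n using Nat.strong_induction_on with
    | _ n ih =>
      match n with
      | 0 => simpa using h0
      | 1 => simp
      | (m+2) =>
        have h1 := hpar ((m+1) * t) t
        have e1 : (m+1) * t + t = ((m+2 : ℕ):ℝ) * t := by push_cast; ring
        have e2 : (m+1) * t - t = ((m:ℕ):ℝ) * t := by push_cast; ring
        have e3 : ((m+1 : ℕ):ℝ) * t = (m+1) * t := by push_cast; ring
        rw [e1, e2, ← e3] at h1
        rw [ih m (by omega), ih (m+1) (by omega)] at h1
        have : L (((m+2:ℕ):ℝ) * t) = 2 * ((((m+1:ℕ)):ℂ)^2 * L t) + 2 * L t - ((m:ℂ))^2 * L t := by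
          push_cast at h1 ⊢
          linear_combination h1
        rw [this]
        push_cast
        ring
  have hint : ∀ (n : ℤ) (t : ℝ), L (n * t) = (n:ℂ)^2 * L t := by
    intro n t
    rcases le_or_gt 0 n with hn | hn
    · lift n to ℕ using hn
      exact_mod_cast hnat n t
    · have : (n:ℝ) * t = -((-n : ℤ) * t) := by push_cast; ring
      rw [this, heven]
      have := hnat (-n).toNat t
      have hcast : (((-n).toNat : ℤ) : ℝ) = ((-n : ℤ) : ℝ) := by
        congr 1; omega
      rw [show (((-n).toNat : ℕ) : ℝ) = ((-n:ℤ):ℝ) by exact_mod_cast hcast] at this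
      rw [this]
      have : (((-n).toNat : ℕ) : ℂ) = ((-n:ℤ):ℂ) := by exact_mod_cast (by omega : ((-n).toNat : ℤ) = -n)
      rw [this]
      push_cast
      ring
  have hrat : ∀ q : ℚ, L ((q:ℝ)) = (((q:ℝ)):ℂ)^2 * L 1 := by
    intro q
    have hdz : (q.den : ℝ) ≠ 0 := Nat.cast_ne_zero.mpr q.den_nz
    have hdz' : (q.den : ℂ) ≠ 0 := Nat.cast_ne_zero.mpr q.den_nz
    set u : ℝ := 1 / q.den with hu
    have h1 : L 1 = ((q.den:ℕ):ℂ)^2 * L u := by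
      rw [← hnat q.den u]
      congr 1
      rw [hu, mul_one_div_cancel (Nat.cast_ne_zero.mpr q.den_nz)]
    have h2 : L ((q:ℝ)) = ((q.num:ℤ):ℂ)^2 * L u := by
      rw [← hint q.num u]
      congr 1
      rw [hu, Rat.cast_def]
      field_simp
    rw [h2]
    have hLu : L u = L 1 / ((q.den:ℕ):ℂ)^2 := by
      rw [h1]; field_simp
    rw [hLu]
    rw [show (((q:ℝ)):ℂ) = ((q.num:ℂ))/((q.den:ℂ)) by push_cast [Rat.cast_def]; norm_num]
    field_simp
  have := Continuous.ext_on (Rat.denseRange_cast (𝕜 := ℝ)) hL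
    (by continuity : Continuous fun t : ℝ => ((t:ℂ))^2 * L 1)
    (by rintro _ ⟨q, rfl⟩; exact hrat q)
  intro t
  exact congrFun this t

lemma lin_of_add {L : ℝ → ℂ} (hL : Continuous L)
    (hadd : ∀ a b : ℝ, L (a+b) = L a + L b) :
    ∀ t : ℝ, L t = (t:ℂ) * L 1 := by
  have h0 : L 0 = 0 := by
    have := hadd 0 0; simp only [add_zero] at this; linear_combination -this
  have heven : ∀ t : ℝ, L (-t) = - L t := by
    intro t
    have := hadd t (-t)
    simp only [add_neg_cancel, h0] at this
    linear_combination -this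
  have hnat : ∀ (n : ℕ) (t : ℝ), L (n * t) = (n:ℂ) * L t := by
    intro n t
    induction n with
    | zero => simpa using h0
    | succ m ih =>
      have := hadd (m * t) t
      rw [ih] at this
      rw [show ((m+1:ℕ):ℝ) * t = (m:ℝ) * t + t by push_cast; ring, this]
      push_cast; ring
  have hint : ∀ (n : ℤ) (t : ℝ), L (n * t) = (n:ℂ) * L t := by
    intro n t
    rcases le_or_gt 0 n with hn | hn
    · lift n to ℕ using hn; exact_mod_cast hnat n t
    · have e : (n:ℝ) * t = -(((-n).toNat : ℕ) * t) := by
        have : (((-n).toNat : ℤ):ℝ) = ((-n:ℤ):ℝ) := by congr 1; omega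
        push_cast at this ⊢
        rw [this]; ring
      rw [e, heven, hnat]
      have : (((-n).toNat : ℕ) : ℂ) = ((-n:ℤ):ℂ) := by
        exact_mod_cast (by omega : ((-n).toNat : ℤ) = -n)
      rw [this]; push_cast; ring
  have hrat : ∀ q : ℚ, L ((q:ℝ)) = (((q:ℝ)):ℂ) * L 1 := by
    intro q
    have hdz' : (q.den : ℂ) ≠ 0 := Nat.cast_ne_zero.mpr q.den_nz
    set u : ℝ := 1 / q.den with hu
    have h1 : L 1 = ((q.den:ℕ):ℂ) * L u := by
      rw [← hnat q.den u]; congr 1; rw [hu, mul_one_div_cancel (Nat.cast_ne_zero.mpr q.den_nz)]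
    have h2 : L ((q:ℝ)) = ((q.num:ℤ):ℂ) * L u := by
      rw [← hint q.num u]; congr 1; rw [hu, Rat.cast_def]; field_simp
    rw [h2, show L u = L 1 / ((q.den:ℕ):ℂ) by rw [h1]; field_simp,
      show (((q:ℝ)):ℂ) = ((q.num:ℂ))/((q.den:ℂ)) by push_cast [Rat.cast_def]; norm_num]
    field_simp
  have := Continuous.ext_on (Rat.denseRange_cast (𝕜 := ℝ)) hL
    (by continuity : Continuous fun t : ℝ => ((t:ℂ)) * L 1)
    (by rintro _ ⟨q, rfl⟩; exact hrat q)
  intro t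
  exact congrFun this t

lemma exists_log (φ : ℝ → ℂ) (hφ : Continuous φ) (hne : ∀ t, φ t ≠ 0) (h0 : φ 0 = 1)
    (m : ℕ) (hrel : ∀ t, φ (2*t) = (φ t)^m) :
    ∃ L : ℝ → ℂ, Continuous L ∧ L 0 = 0 ∧ ∀ t, Complex.exp (L t) = φ t := by
  -- small interval where φ is close to 1
  obtain ⟨δ, hδpos, hδ⟩ : ∃ δ > 0, ∀ t : ℝ, |t| < δ → ‖φ t - 1‖ < 1 := by
    have := Metric.continuousAt_iff.mp (hφ.continuousAt (x := 0))
    obtain ⟨δ, hδpos, hδ⟩ := this 1 one_pos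
    exact ⟨δ, hδpos, fun t ht => by
      have := hδ (show dist t 0 < δ by simpa [Real.dist_eq] using ht)
      simpa [dist_eq_norm, h0] using this⟩
  have hslit : ∀ t : ℝ, |t| < δ → φ t ∈ Complex.slitPlane := by
    intro t ht
    have h1' := hδ t ht
    have h2 : |(φ t - 1).re| ≤ ‖φ t - 1‖ := Complex.abs_re_le_norm _
    rw [Complex.sub_re, Complex.one_re] at h2
    have : 0 < (φ t).re := by
      have := abs_lt.mp (lt_of_le_of_lt h2 h1')
      linarith [this.1]
    exact Complex.mem_slitPlane_iff.mpr (Or.inl this)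
  set ℓ : ℝ → ℂ := fun t => Complex.log (φ t) with hℓ
  have hℓ0 : ℓ 0 = 0 := by simp [hℓ, h0]
  have hexpℓ : ∀ t, Complex.exp (ℓ t) = φ t := fun t => Complex.exp_log (hne t)
  have hℓca : ∀ t : ℝ, |t| < δ → ContinuousAt ℓ t := by
    intro t ht
    exact (continuousAt_clog (hslit t ht)).comp hφ.continuousAt
  -- doubling identity on small scale
  have hdouble : ∀ t : ℝ, |t| < δ/2 → ℓ (2*t) = (m:ℂ) * ℓ t := by
    have hpre : IsPreconnected (Set.Ioo (-(δ/2)) (δ/2)) := isPreconnected_Ioo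
    have key := aux_discrete hpre (φ := fun t => ℓ (2*t) - (m:ℂ) * ℓ t)
      (by
        apply ContinuousOn.sub
        · refine ContinuousOn.comp (g := ℓ) (t := Set.Ioo (-δ) δ)
            (fun u hu => (hℓca u (abs_lt.mpr ⟨hu.1, hu.2⟩)).continuousWithinAt)
            ((continuous_const.mul continuous_id).continuousOn) ?_
          intro u hu
          simp only [Set.mem_Ioo] at hu ⊢
          constructor
          · nlinarith [hu.1, hu.2, hδpos]
          · nlinarith [hu.1, hu.2, hδpos]
        · exact continuousOn_const.mul (fun u hu =>
            (hℓca u (by rw [abs_lt]; exact ⟨by linarith [hu.1], by linarith [hu.2]⟩)).continuousWithinAt))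
      (by
        intro t _
        rw [Complex.exp_sub, hexpℓ, hrel]
        rw [show (m:ℂ) * ℓ t = ((m:ℕ):ℂ) * ℓ t by norm_num, Complex.exp_nat_mul, hexpℓ]
        exact div_self (pow_ne_zero _ (hne t)))
      (t₀ := 0) (Set.mem_Ioo.mpr ⟨by linarith, by linarith⟩)
      (by simp [hℓ0])
    intro t ht
    have := key t (Set.mem_Ioo.mpr (abs_lt.mp ht))
    linear_combination this
  -- iterated halving
  have hiter : ∀ (n : ℕ) (t : ℝ), |t| < δ/2 → ℓ t = (m:ℂ)^n * ℓ (t / 2^n) := by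
    intro n
    induction n with
    | zero => intro t _; simp
    | succ k ih =>
      intro t ht
      have h1 := ih t ht
      have h2 : ℓ (t/2^k) = (m:ℂ) * ℓ (t/2^(k+1)) := by
        have := hdouble (t/2^(k+1)) (by
          rw [abs_div, show |(2:ℝ)^(k+1)| = 2^(k+1) from abs_of_pos (by positivity)]
          have h2p : (1:ℝ) ≤ (2:ℝ)^(k+1) := one_le_pow₀ (by norm_num)
          have : |t|/(2:ℝ)^(k+1) ≤ |t| := div_le_self (abs_nonneg t) h2p
          linarith)
        rw [show 2 * (t/2^(k+1)) = t/2^k by ring] at this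
        exact this
      rw [h1, h2, pow_succ]
      ring
  -- stability of the rescaled logarithm
  have hstab : ∀ (n₁ n₂ : ℕ) (t : ℝ), |t|/2^n₁ < δ/2 → |t|/2^n₂ < δ/2 →
      (m:ℂ)^n₁ * ℓ (t/2^n₁) = (m:ℂ)^n₂ * ℓ (t/2^n₂) := by
    have key : ∀ (n₁ n₂ : ℕ), n₁ ≤ n₂ → ∀ t : ℝ, |t|/2^n₁ < δ/2 →
        (m:ℂ)^n₁ * ℓ (t/2^n₁) = (m:ℂ)^n₂ * ℓ (t/2^n₂) := by
      intro n₁ n₂ hle t h₁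
      have habs : |t/2^n₁| < δ/2 := by
        rw [abs_div, show |(2:ℝ)^n₁| = 2^n₁ from abs_of_pos (by positivity)]
        exact h₁
      have := hiter (n₂ - n₁) (t/2^n₁) habs
      rw [show t/2^n₁/2^(n₂-n₁) = t/2^n₂ by
        rw [div_div, ← pow_add]
        congr 2
        omega] at this
      rw [this, ← mul_assoc, ← pow_add]
      congr 2
      omega
    intro n₁ n₂ t h₁ h₂
    rcases le_total n₁ n₂ with h | h
    · exact key n₁ n₂ h t h₁
    · exact (key n₂ n₁ h t h₂).symm
  -- the scale choice
  set k : ℝ → ℕ := fun t => ⌈2*|t|/δ⌉₊ with hk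
  have hkb : ∀ t : ℝ, |t|/2^(k t) < δ/2 := by
    intro t
    have h1 : (2*|t|/δ : ℝ) ≤ (k t : ℝ) := Nat.le_ceil _
    have h2 : (k t : ℝ) < (2:ℝ)^(k t) := by
      calc ((k t : ℕ) : ℝ) < ((2^(k t) : ℕ) : ℝ) := by exact_mod_cast (Nat.lt_two_pow_self (n := k t))
        _ = (2:ℝ)^(k t) := by push_cast; ring
    have h3 : 2*|t|/δ < (2:ℝ)^(k t) := lt_of_le_of_lt h1 h2
    have h3' : 2*|t| < (2:ℝ)^(k t) * δ := by
      rw [div_lt_iff₀ hδpos] at h3; exact h3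
    rw [div_lt_iff₀ (by positivity)]
    nlinarith [h3']
  set L : ℝ → ℂ := fun t => (m:ℂ)^(k t) * ℓ (t/2^(k t)) with hL
  have hLspec : ∀ (t : ℝ) (n : ℕ), |t|/2^n < δ/2 → L t = (m:ℂ)^n * ℓ (t/2^n) := by
    intro t n hn
    exact hstab (k t) n t (hkb t) hn
  have hL0 : L 0 = 0 := by
    simp only [hL]
    rw [show (0:ℝ)/2^(k 0) = 0 by simp, hℓ0, mul_zero]
  -- φ iterate
  have hφiter : ∀ (n : ℕ) (t : ℝ), (φ (t/2^n))^(m^n) = φ t := by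
    intro n
    induction n with
    | zero => intro t; simp
    | succ j ih =>
      intro t
      have h1 : φ (t/2^j) = (φ (t/2^(j+1)))^m := by
        rw [← hrel (t/2^(j+1))]
        congr 1
        ring
      calc (φ (t/2^(j+1)))^(m^(j+1)) = ((φ (t/2^(j+1)))^m)^(m^j) := by
            rw [← pow_mul]; congr 1; rw [pow_succ]; ring
        _ = (φ (t/2^j))^(m^j) := by rw [← h1]
        _ = φ t := ih t
  have hexpL : ∀ t, Complex.exp (L t) = φ t := by
    intro t
    simp only [hL]
    rw [show (m:ℂ)^(k t) = ((m^(k t) : ℕ) : ℂ) by push_cast; ring, Complex.exp_nat_mul, hexpℓ]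
    exact hφiter (k t) t
  -- continuity
  have hLcont : Continuous L := by
    rw [continuous_iff_continuousAt]
    intro t₀
    set n := ⌈2*(|t₀|+1)/δ⌉₊ with hn
    have hnb : (|t₀|+1)/2^n < δ/2 := by
      have h1 : (2*(|t₀|+1)/δ : ℝ) ≤ (n : ℝ) := Nat.le_ceil _
      have h2 : (n : ℝ) < (2:ℝ)^n := by
        calc ((n : ℕ) : ℝ) < ((2^n : ℕ) : ℝ) := by exact_mod_cast (Nat.lt_two_pow_self (n := n))
          _ = (2:ℝ)^n := by push_cast; ring
      have h3 : 2*(|t₀|+1)/δ < (2:ℝ)^n := lt_of_le_of_lt h1 h2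
      have h3' : 2*(|t₀|+1) < (2:ℝ)^n * δ := by
        rw [div_lt_iff₀ hδpos] at h3; exact h3
      rw [div_lt_iff₀ (by positivity)]
      nlinarith [h3']
    have hev : ∀ᶠ t in nhds t₀, L t = (m:ℂ)^n * ℓ (t/2^n) := by
      filter_upwards [Metric.ball_mem_nhds t₀ one_pos] with t ht
      apply hLspec
      have : |t| < |t₀| + 1 := by
        have := abs_sub_abs_le_abs_sub t t₀
        rw [Metric.mem_ball, Real.dist_eq] at ht
        linarith
      have h2n : (0:ℝ) < 2^n := by positivity
      have h4 : |t|/2^n < (|t₀|+1)/2^n := by gcongr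
      linarith
    have hlt : |t₀/2^n| < δ := by
      rw [abs_div, show |(2:ℝ)^n| = 2^n from abs_of_pos (by positivity)]
      have h2n : (0:ℝ) < 2^n := by positivity
      have h4 : |t₀|/2^n ≤ (|t₀|+1)/2^n := by gcongr; linarith
      linarith
    have hca : ContinuousAt (fun t : ℝ => (m:ℂ)^n * ℓ (t/2^n)) t₀ := by
      have hdivc : ContinuousAt (fun t : ℝ => t/2^n) t₀ := by fun_prop
      exact continuousAt_const.mul (ContinuousAt.comp (f := fun t : ℝ => t/2^n) (g := ℓ) (hℓca _ hlt) hdivc)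
    exact hca.congr (Filter.EventuallyEq.symm hev)
  exact ⟨L, hLcont, hL0, hexpL⟩

theorem cubic_functional_equation_solution
    (f : ℝ → ℂ) (F : ℝ × ℝ → ℂ)
    (hf : Continuous f)
    (hF : ContinuousOn F {p : ℝ × ℝ | p.2^2 ≤ 3 * p.1})
    (hnontriv : ∃ x : ℝ, f x ≠ 0)
    (heq : ∀ x y z : ℝ, f x * f y * f z = F (x^2 + y^2 + z^2, x + y + z)) :
    ∃ A B C : ℂ, ∀ x : ℝ, f x = Complex.exp (A * x^2 + B * x + C) := by
  obtain ⟨x₀, hx₀⟩ := hnontriv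
  have key : ∀ s d : ℝ, f (s+4*d) * f (s+d)^2 = f (s+3*d)^2 * f s := by
    intro s d
    have h1 := heq (s+4*d) (s+d) (s+d)
    have h2 := heq (s+3*d) (s+3*d) s
    rw [show (s+4*d)^2+(s+d)^2+(s+d)^2 = (s+3*d)^2+(s+3*d)^2+s^2 by ring,
        show (s+4*d)+(s+d)+(s+d) = (s+3*d)+(s+3*d)+s by ring] at h1
    linear_combination h1 - h2
  -- f never vanishes
  have hne : ∀ x : ℝ, f x ≠ 0 := by
    intro b hb
    set u : ℕ → ℝ := fun n => x₀ + (3/4)^n * (b - x₀) with hu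
    have hz : ∀ n, f (u n) = 0 := by
      intro n
      induction n with
      | zero => simpa [hu] using hb
      | succ j ih =>
        have hk := key x₀ ((u j - x₀)/4)
        rw [show x₀ + 4*((u j - x₀)/4) = u j by ring] at hk
        rw [ih, zero_mul] at hk
        have h3 : f (x₀ + 3*((u j - x₀)/4)) ^ 2 * f x₀ = 0 := hk.symm
        rcases mul_eq_zero.mp h3 with h4 | h4
        · have h5 : f (x₀ + 3*((u j - x₀)/4)) = 0 := by
            exact pow_eq_zero_iff (by norm_num) |>.mp h4
          rw [show x₀ + 3*((u j - x₀)/4) = u (j+1) by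
            simp only [hu]; ring] at h5
          exact h5
        · exact absurd h4 hx₀
    have hlim : Filter.Tendsto u Filter.atTop (nhds x₀) := by
      have h1 : Filter.Tendsto (fun n : ℕ => (3/4:ℝ)^n) Filter.atTop (nhds 0) :=
        tendsto_pow_atTop_nhds_zero_of_lt_one (by norm_num) (by norm_num)
      have h2 := (h1.mul_const (b - x₀)).const_add x₀
      simpa [hu] using h2
    have h1 : Filter.Tendsto (fun n => f (u n)) Filter.atTop (nhds (f x₀)) :=
      (hf.tendsto x₀).comp hlim
    have h2 : Filter.Tendsto (fun n => f (u n)) Filter.atTop (nhds 0) := by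
      simp only [hz]
      exact tendsto_const_nhds
    exact hx₀ (tendsto_nhds_unique h1 h2)
  -- the second-difference quotient
  set D : ℝ → ℝ → ℂ := fun s d => f (s+2*d) * f s / f (s+d)^2 with hD
  have hDper : ∀ s d : ℝ, D (s+2*d) d = D s d := by
    intro s d
    simp only [hD]
    rw [show s+2*d+2*d = s+4*d by ring, show s+2*d+d = s+3*d by ring,
      div_eq_div_iff (pow_ne_zero _ (hne _)) (pow_ne_zero _ (hne _))]
    linear_combination f (s+2*d) * key s d
  have hDalg : ∀ s d : ℝ, D s d = D s (d/2) * D (s+d/2) (d/2)^2 * D (s+d) (d/2) := by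
    intro s d
    simp only [hD]
    rw [show s+2*(d/2) = s+d by ring, show s+d/2+2*(d/2) = s+3*(d/2) by ring,
      show s+d/2+d/2 = s+d by ring, show s+d+2*(d/2) = s+2*d by ring,
      show s+d+d/2 = s+3*(d/2) by ring]
    rw [div_pow, div_mul_div_comm, div_mul_div_comm,
      div_eq_div_iff (pow_ne_zero _ (hne _))
        (mul_ne_zero (mul_ne_zero (pow_ne_zero _ (hne _)) (pow_ne_zero _ (pow_ne_zero _ (hne _)))) (pow_ne_zero _ (hne _)))]
    ring
  have hDstep : ∀ s d : ℝ, D s d = D s (d/2)^2 * D (s+d/2) (d/2)^2 := by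
    intro s d
    rw [hDalg s d, show s+d = s+2*(d/2) by ring, hDper]
    ring
  have hHn : ∀ n : ℕ, ∀ s d : ℝ, D (s + 2*d/2^n) d = D s d := by
    intro n
    induction n with
    | zero => intro s d; rw [show 2*d/2^0 = 2*d by norm_num]; exact hDper s d
    | succ j ih =>
      intro s d
      have e1 : s + 2*d/2^(j+1) = s + 2*(d/2)/2^j := by ring
      rw [hDstep (s + 2*d/2^(j+1)) d, e1, ih,
        show s + 2*(d/2)/2^j + d/2 = (s + d/2) + 2*(d/2)/2^j by ring, ih,
        ← hDstep s d]
  have hDcont : ∀ d : ℝ, Continuous (fun s => D s d) := by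
    intro d
    simp only [hD]
    apply Continuous.div
    · exact (hf.comp (continuous_id.add continuous_const)).mul hf
    · exact (hf.comp (continuous_id.add continuous_const)).pow 2
    · exact fun x => pow_ne_zero _ (hne _)
  have hDconst : ∀ d s : ℝ, D s d = D 0 d := by
    intro d s
    rcases eq_or_ne d 0 with rfl | hd0
    · simp only [hD]
      rw [show s+2*0 = s by ring, show s+0 = s by ring, show (0:ℝ)+2*0 = 0 by ring,
        show (0:ℝ)+0 = 0 by ring]
      rw [div_eq_div_iff (pow_ne_zero _ (hne _)) (pow_ne_zero _ (hne _))]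
      ring
    · have hper : ∀ n : ℕ, Function.Periodic (fun s => D s d) (2*d/2^n) := by
        intro n s'
        exact hHn n s' d
      set t : ℕ → ℝ := fun n => (round (s / (2*d/2^n)) : ℤ) * (2*d/2^n) with ht
      have hteq : ∀ n, D (t n) d = D 0 d := by
        intro n
        exact (hper n).int_mul_eq _
      have htend : Filter.Tendsto t Filter.atTop (nhds s) := by
        rw [tendsto_iff_dist_tendsto_zero]
        apply squeeze_zero (fun n => dist_nonneg)
          (g := fun n : ℕ => |2*d| * (1/2)^n)
        · intro n
          have h2d : (2*d : ℝ) ≠ 0 := mul_ne_zero two_ne_zero hd0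
          have hp : (2*d/2^n : ℝ) ≠ 0 := div_ne_zero h2d (by positivity)
          rw [Real.dist_eq]
          have h1 : |(round (s / (2*d/2^n)) : ℝ) - s/(2*d/2^n)| ≤ 1/2 := by
            rw [abs_sub_comm]; exact abs_sub_round _
          have e : t n - s = ((round (s / (2*d/2^n)) : ℝ) - s/(2*d/2^n)) * (2*d/2^n) := by
            simp only [ht]; field_simp
          rw [e, abs_mul]
          have h3 : |2*d/2^n| = |2*d| * (1/2)^n := by
            rw [abs_div, show |(2:ℝ)^n| = 2^n from abs_of_pos (by positivity),
              div_eq_mul_inv, ← inv_pow]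
            norm_num
          rw [h3]
          calc |(round (s / (2*d/2^n)) : ℝ) - s/(2*d/2^n)| * (|2*d| * (1/2)^n)
              ≤ (1/2) * (|2*d| * (1/2)^n) := by
                apply mul_le_mul_of_nonneg_right h1 (by positivity)
            _ ≤ |2*d| * (1/2)^n := by
                nlinarith [abs_nonneg (2*d), pow_nonneg (by norm_num : (0:ℝ) ≤ 1/2) n]
        · have h1 : Filter.Tendsto (fun n : ℕ => (1/2:ℝ)^n) Filter.atTop (nhds 0) :=
            tendsto_pow_atTop_nhds_zero_of_lt_one (by norm_num) (by norm_num)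
          simpa using h1.const_mul |2*d|
      have h1 : Filter.Tendsto (fun n => D (t n) d) Filter.atTop (nhds (D s d)) :=
        ((hDcont d).tendsto s).comp htend
      rw [show (fun n => D (t n) d) = (fun _ : ℕ => D 0 d) from funext hteq] at h1
      exact tendsto_nhds_unique h1 tendsto_const_nhds
  -- the function c
  set c : ℝ → ℂ := fun d => D 0 d with hc
  have hcd : ∀ d : ℝ, c d = f (2*d) * f 0 / f d ^ 2 := by
    intro d
    simp only [hc, hD]
    rw [show (0:ℝ)+2*d = 2*d by ring, show (0:ℝ)+d = d by ring]
  have hJc : ∀ x h : ℝ, f (x+h) * f (x-h) = f x ^ 2 * c h := by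
    intro x h
    have h1 := hDconst h (x-h)
    simp only [hD, ← hc] at h1
    rw [show x-h+2*h = x+h by ring, show x-h+h = x by ring] at h1
    rw [div_eq_iff (pow_ne_zero _ (hne x))] at h1
    linear_combination h1
  have hc0 : c 0 = 1 := by
    rw [hcd]
    rw [show (2:ℝ)*0 = 0 by ring, div_eq_one_iff_eq (pow_ne_zero _ (hne 0))]
    ring
  have hcne : ∀ d : ℝ, c d ≠ 0 := by
    intro d
    rw [hcd]
    exact div_ne_zero (mul_ne_zero (hne _) (hne _)) (pow_ne_zero _ (hne _))
  have hccont : Continuous c := by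
    have : Continuous fun d : ℝ => f (2*d) * f 0 / f d ^ 2 := by
      apply Continuous.div
      · exact (hf.comp (continuous_const.mul continuous_id)).mul continuous_const
      · exact hf.pow 2
      · exact fun x => pow_ne_zero _ (hne _)
    exact (funext hcd : c = _) ▸ this
  have hcpar : ∀ h k : ℝ, c (h+k) * c (h-k) = c h^2 * c k^2 := by
    intro h k
    have A := hJc h k
    have B := hJc (-h) k
    have C := hJc 0 (h+k)
    have D' := hJc 0 (h-k)
    have E' := hJc 0 h
    rw [zero_add, zero_sub, show -(h+k) = -h-k by ring] at C
    rw [zero_add, zero_sub, show -(h-k) = -h+k by ring] at D'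
    rw [zero_add, zero_sub] at E'
    have big : f 0^2 * f 0^2 * (c (h+k) * c (h-k)) = f 0^2 * f 0^2 * (c h^2 * c k^2) := by
      linear_combination (f (-h+k) * f (-h-k)) * A + (f h^2 * c k) * B +
        (c k^2 * (f h * f (-h) + f 0^2 * c h)) * E' - (f (h-k) * f (-h+k)) * C -
        (f 0^2 * c (h+k)) * D'
    exact mul_left_cancel₀ (mul_ne_zero (pow_ne_zero _ (hne 0)) (pow_ne_zero _ (hne 0))) big
  have hcdouble : ∀ t : ℝ, c (2*t) = c t^4 := by
    intro t
    have := hcpar t t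
    rw [show t+t = 2*t by ring, show t-t = 0 by ring, hc0, mul_one] at this
    linear_combination this
  -- take logarithm of c
  obtain ⟨L, hLcont, hL0, hexpL⟩ := exists_log c hccont hcne hc0 4
    (by intro t; rw [hcdouble t])
  have hLpar : ∀ h k : ℝ, L (h+k) + L (h-k) = 2 * L h + 2 * L k := by
    have key2 := aux_discrete (isPreconnected_univ (α := ℝ × ℝ))
      (φ := fun p : ℝ × ℝ => L (p.1+p.2) + L (p.1-p.2) - (L p.1 + L p.1 + (L p.2 + L p.2)))
      (by
        apply Continuous.continuousOn
        have h1 : Continuous fun p : ℝ × ℝ => p.1 + p.2 := continuous_fst.add continuous_snd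
        have h2 : Continuous fun p : ℝ × ℝ => p.1 - p.2 := continuous_fst.sub continuous_snd
        have h3 : Continuous fun p : ℝ × ℝ => p.1 := continuous_fst
        have h4 : Continuous fun p : ℝ × ℝ => p.2 := continuous_snd
        exact ((hLcont.comp h1).add (hLcont.comp h2)).sub
          (((hLcont.comp h3).add (hLcont.comp h3)).add ((hLcont.comp h4).add (hLcont.comp h4))))
      (by
        rintro ⟨h, k⟩ -
        simp only
        rw [Complex.exp_sub, Complex.exp_add, Complex.exp_add, Complex.exp_add, Complex.exp_add,
          hexpL, hexpL, hexpL, hexpL]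
        rw [div_eq_one_iff_eq (by
          exact mul_ne_zero (mul_ne_zero (hcne _) (hcne _)) (mul_ne_zero (hcne _) (hcne _)))]
        linear_combination hcpar h k)
      (t₀ := ((0:ℝ), (0:ℝ))) trivial
      (by simp [hL0])
    intro h k
    have := key2 (h, k) trivial
    simp only at this
    linear_combination this
  have hLq := quad_of_par hLcont hL0 hLpar
  have hcform : ∀ t : ℝ, c t = Complex.exp (L 1 * (t:ℂ)^2) := by
    intro t
    rw [← hexpL t, hLq t]
    congr 1
    ring
  -- the normalized function g
  set g : ℝ → ℂ := fun x => f x / (f 0 * Complex.exp (L 1/2 * (x:ℂ)^2)) with hg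
  have hgne : ∀ x, g x ≠ 0 := fun x =>
    div_ne_zero (hne x) (mul_ne_zero (hne 0) (Complex.exp_ne_zero _))
  have hgcont : Continuous g := by
    apply Continuous.div hf
    · exact continuous_const.mul
        (Complex.continuous_exp.comp (continuous_const.mul (Complex.continuous_ofReal.pow 2)))
    · exact fun x => mul_ne_zero (hne 0) (Complex.exp_ne_zero _)
  have hg0 : g 0 = 1 := by
    simp only [hg]
    rw [show ((0:ℝ):ℂ)^2 = 0 by norm_num, mul_zero, Complex.exp_zero, mul_one]
    exact div_self (hne 0)
  have hgmul : ∀ a b : ℝ, g (a+b) = g a * g b := by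
    intro a b
    have I1 := hJc ((a+b)/2) ((a-b)/2)
    have I2 := hJc ((a+b)/2) ((a+b)/2)
    rw [show (a+b)/2+(a-b)/2 = a by ring, show (a+b)/2-(a-b)/2 = b by ring] at I1
    rw [show (a+b)/2+(a+b)/2 = a+b by ring, show (a+b)/2-(a+b)/2 = 0 by ring] at I2
    have hX : f (a+b) * f 0 * c ((a-b)/2) = f a * f b * c ((a+b)/2) := by
      linear_combination c ((a-b)/2) * I2 - c ((a+b)/2) * I1
    rw [hcform, hcform] at hX
    have hE : Complex.exp (L 1 * (((a-b)/2 : ℝ):ℂ)^2) * Complex.exp (L 1/2 * (((a+b):ℝ):ℂ)^2) =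
        Complex.exp (L 1 * (((a+b)/2 : ℝ):ℂ)^2) * (Complex.exp (L 1/2 * ((a:ℝ):ℂ)^2) * Complex.exp (L 1/2 * ((b:ℝ):ℂ)^2)) := by
      rw [← Complex.exp_add, ← Complex.exp_add, ← Complex.exp_add]
      congr 1
      push_cast
      ring
    have step : f (a+b) * f 0 * (Complex.exp (L 1/2 * ((a:ℝ):ℂ)^2) * Complex.exp (L 1/2 * ((b:ℝ):ℂ)^2)) * Complex.exp (L 1 * (((a-b)/2 : ℝ):ℂ)^2)
        = f a * f b * Complex.exp (L 1/2 * (((a+b):ℝ):ℂ)^2) * Complex.exp (L 1 * (((a-b)/2 : ℝ):ℂ)^2) := by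
      linear_combination (Complex.exp (L 1/2 * ((a:ℝ):ℂ)^2) * Complex.exp (L 1/2 * ((b:ℝ):ℂ)^2)) * hX - (f a * f b) * hE
    have step2 := mul_right_cancel₀ (Complex.exp_ne_zero _) step
    simp only [hg]
    rw [div_mul_div_comm, div_eq_div_iff
      (mul_ne_zero (hne 0) (Complex.exp_ne_zero _))
      (mul_ne_zero (mul_ne_zero (hne 0) (Complex.exp_ne_zero _)) (mul_ne_zero (hne 0) (Complex.exp_ne_zero _)))]
    push_cast at step2 ⊢
    linear_combination f 0 * step2
  have hg2 : ∀ t : ℝ, g (2*t) = g t^2 := by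
    intro t
    rw [show (2*t:ℝ) = t + t by ring, hgmul]
    ring
  obtain ⟨M, hMcont, hM0, hexpM⟩ := exists_log g hgcont hgne hg0 2 hg2
  have hMadd : ∀ a b : ℝ, M (a+b) = M a + M b := by
    have key2 := aux_discrete (isPreconnected_univ (α := ℝ × ℝ))
      (φ := fun p : ℝ × ℝ => M (p.1+p.2) - (M p.1 + M p.2))
      (by
        apply Continuous.continuousOn
        exact (hMcont.comp (continuous_fst.add continuous_snd)).sub
          ((hMcont.comp continuous_fst).add (hMcont.comp continuous_snd)))
      (by
        rintro ⟨a, b⟩ -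
        simp only
        rw [Complex.exp_sub, Complex.exp_add, hexpM, hexpM, hexpM, hgmul]
        exact div_self (mul_ne_zero (hgne a) (hgne b)))
      (t₀ := ((0:ℝ), (0:ℝ))) trivial
      (by simp [hM0])
    intro a b
    have := key2 (a, b) trivial
    simp only at this
    linear_combination this
  have hMlin := lin_of_add hMcont hMadd
  -- assemble
  refine ⟨L 1/2, M 1, Complex.log (f 0), ?_⟩
  intro x
  rw [Complex.exp_add, Complex.exp_add, Complex.exp_log (hne 0)]
  have h1 : Complex.exp (M x) = g x := hexpM x
  rw [hMlin x] at h1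
  have h2 : g x = f x / (f 0 * Complex.exp (L 1/2 * (x:ℂ)^2)) := by rw [hg]
  rw [h2, eq_div_iff (mul_ne_zero (hne 0) (Complex.exp_ne_zero _))] at h1
  rw [show (M 1) * (x:ℂ) = (x:ℂ) * M 1 by ring]
  linear_combination -h1
end

section
/- Let g : ℝ → ℂ be a continuous function with g(0) = 1 and g(x)·g(-x) = 1 for all x, and suppose there is a function G on the closed parabolic region {3s ≥ t²} with g(x)·g(y)·g(z) = G(x²+y²+z², x+y+z) for all x, y, z ∈ ℝ. Then g satisfies g(x)·g(y) = g(x+y) for all x, y ∈ ℝ. -/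
/-! Since `G` only sees the first two power sums, `g x * g y * g z` is the same for any two triples
with equal `x + y + z` and `x² + y² + z²`. The triples `(x, y, -(x + y))` and `(r, -r, 0)` with
`r² = x² + x y + y²` both have sum `0` and the same sum of squares, so
`g x * g y * g (-(x + y)) = g r * g (-r) * g 0 = 1`; multiplying by `g (x + y)` gives the claim. -/

theorem exists_sq_add_sq_add_neg_add_sq_eq (x y : ℝ) :
    ∃ r : ℝ, x ^ 2 + y ^ 2 + (-(x + y)) ^ 2 = r ^ 2 + (-r) ^ 2 + 0 ^ 2 := by
  have hnonneg : 0 ≤ x ^ 2 + x * y + y ^ 2 := by nlinarith [sq_nonneg (x + y)]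
  refine ⟨√(x ^ 2 + x * y + y ^ 2), ?_⟩
  linear_combination (-2) * Real.sq_sqrt hnonneg

theorem mul_mul_neg_add_eq_one {M : Type*} [CommMonoid M] {g : ℝ → M} {G : ℝ × ℝ → M}
    (hG : ∀ x y z : ℝ, g x * g y * g z = G (x ^ 2 + y ^ 2 + z ^ 2, x + y + z))
    (hg0 : g 0 = 1) (hodd : ∀ x : ℝ, g x * g (-x) = 1) (x y : ℝ) :
    g x * g y * g (-(x + y)) = 1 := by
  obtain ⟨r, hr⟩ := exists_sq_add_sq_add_neg_add_sq_eq x y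
  have hsum : x + y + -(x + y) = r + -r + 0 := by ring
  rw [hG, hr, hsum, ← hG, hodd, hg0, one_mul]

theorem odd_part_cauchy_general
    (g : ℝ → ℂ) (hg0 : g 0 = 1)
    (hodd : ∀ x : ℝ, g x * g (-x) = 1)
    (hG : ∃ G : ℝ × ℝ → ℂ, ∀ x y z : ℝ,
      g x * g y * g z = G (x^2 + y^2 + z^2, x + y + z)) :
    ∀ x y : ℝ, g x * g y = g (x + y) := by
  obtain ⟨G, hGe⟩ := hG
  intro x y
  have htriple : g x * g y * g (-(x + y)) = 1 := mul_mul_neg_add_eq_one hGe hg0 hodd x y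
  have hinv : g (-(x + y)) * g (x + y) = 1 := by rw [mul_comm]; exact hodd (x + y)
  exact left_inv_eq_right_inv htriple hinv

theorem odd_part_cauchy
    (g : ℝ → ℂ) (hg : Continuous g) (hg0 : g 0 = 1)
    (hodd : ∀ x : ℝ, g x * g (-x) = 1)
    (hG : ∃ G : ℝ × ℝ → ℂ, ∀ x y z : ℝ,
      g x * g y * g z = G (x^2 + y^2 + z^2, x + y + z)) :
    ∀ x y : ℝ, g x * g y = g (x + y) :=
  odd_part_cauchy_general g hg0 hodd hG
end

section
/- Let h : ℝ² → ℂ be continuous. Suppose h satisfies h(a)·h(c) = h(b)·h(d) whenever a, c and b, d are opposite vertices of a rectangle in ℝ², and h is even. Then h is constant on every circle centered at the origin, i.e., |x| = |y| implies h(x) = h(y). -/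
open scoped RealInnerProductSpace

theorem even_rectangular_spherically_symmetric
    (h : EuclideanSpace ℝ (Fin 2) → ℂ)
    (hc : Continuous h)
    (heven : ∀ x, h (-x) = h x)
    (hrect : ∀ a b c d : EuclideanSpace ℝ (Fin 2),
      a + c = b + d → ⟪a - b, c - b⟫ = 0 → a - b = d - c →
      h a * h c = h b * h d) :
    ∀ x y : EuclideanSpace ℝ (Fin 2), ‖x‖ = ‖y‖ → h x = h y := by
  have hsq : ∀ x y : EuclideanSpace ℝ (Fin 2), ‖x‖ = ‖y‖ → h x * h x = h y * h y := by
    intro x y hxy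
    have h2 : ⟪x - y, (-x) - y⟫ = 0 := by
      have e : ((-x) : EuclideanSpace ℝ (Fin 2)) - y = -(x + y) := by abel
      rw [e, inner_neg_right]
      have e2 : ⟪x - y, x + y⟫ = ‖x‖^2 - ‖y‖^2 := by
        rw [inner_sub_left, inner_add_right, inner_add_right,
            real_inner_self_eq_norm_sq, real_inner_self_eq_norm_sq,
            real_inner_comm y x]
        ring
      rw [e2, hxy]; ring
    have h1 : x + (-x) = y + (-y) := by abel
    have h3 : x - y = (-y) - (-x) := by abel
    have := hrect x y (-x) (-y) h1 h2 h3
    rwa [heven, heven] at this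
  have hdich : ∀ x y : EuclideanSpace ℝ (Fin 2), ‖x‖ = ‖y‖ →
      h y = h x ∨ h y = - h x := by
    intro x y hxy
    have hs := hsq x y hxy
    have hfac : (h y - h x) * (h y + h x) = 0 := by ring_nf; linear_combination -hs
    rcases mul_eq_zero.1 hfac with h' | h'
    · left; linear_combination h'
    · right; linear_combination h'
  intro x y hxy
  by_contra hne
  have hy : h y = - h x := by
    rcases hdich x y hxy with h' | h'
    · exact absurd h'.symm hne
    · exact h'
  have hz0 : h x ≠ 0 := by
    intro h0
    exact hne (by rw [hy, h0, neg_zero])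
  have hd : (0 : ℝ) < dist (h x) (-h x) := by
    rw [dist_pos]
    intro he
    apply hz0
    have : (2 : ℂ) * h x = 0 := by linear_combination he
    simpa using (mul_eq_zero.1 this).resolve_left (by norm_num)
  set d := dist (h x) (-h x) with hdd
  set U : Set (EuclideanSpace ℝ (Fin 2)) := h ⁻¹' Metric.ball (h x) (d/2) with hU
  set V : Set (EuclideanSpace ℝ (Fin 2)) := h ⁻¹' Metric.ball (-h x) (d/2) with hV
  have hUopen : IsOpen U := Metric.isOpen_ball.preimage hc
  have hVopen : IsOpen V := Metric.isOpen_ball.preimage hc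
  have hdisj : Disjoint U V := by
    refine Disjoint.preimage _ (Metric.ball_disjoint_ball ?_)
    rw [← hdd]; linarith
  set S := Metric.sphere (0 : EuclideanSpace ℝ (Fin 2)) ‖x‖ with hS
  have hconn : IsPreconnected S := by
    apply isPreconnected_sphere
    exact Module.one_lt_rank_of_one_lt_finrank (by simp [finrank_euclideanSpace_fin])
  have hcover : S ⊆ U ∪ V := by
    intro w hw
    have hwn : ‖x‖ = ‖w‖ := (mem_sphere_zero_iff_norm.1 hw).symm
    rcases hdich x w hwn with h' | h'
    · left
      simp [hU, Metric.mem_ball, h', half_pos hd]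
    · right
      simp [hV, Metric.mem_ball, h', half_pos hd]
  have hxS : x ∈ S ∩ U := by
    constructor
    · simp [hS]
    · simp [hU, Metric.mem_ball, half_pos hd]
  have hsub : S ⊆ U :=
    hconn.subset_left_of_subset_union hUopen hVopen hdisj hcover ⟨x, hxS⟩
  have hyS : y ∈ S := by simp [hS, mem_sphere_zero_iff_norm, hxy.symm]
  have := hsub hyS
  rw [hU] at this
  simp only [Set.mem_preimage, Metric.mem_ball, hy] at this
  rw [dist_comm] at this
  linarith
end

section
/- Let f : ℝ² → ℂ and F be non-trivial continuous never-vanishing functions satisfying f(x)·f(y) = F(|x|² + |y|², x + y) for all x, y ∈ ℝ². Then there exist constants A ∈ ℂ, b ∈ ℂ², C ∈ ℂ such that f(x) = exp(A·|x|² + b·x + C) for all x ∈ ℝ², and F(t, v) = exp(A·t + b·v + 2C) on the region 2t > |v|². -/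
open Complex Metric Set Finset


lemma lat_norm (m : ℤ) (hm : m ≠ 0) : 2 * Real.pi ≤ ‖(m : ℂ) * (2 * (Real.pi:ℝ) * I)‖ := by
  rw [norm_mul]
  have h1 : ‖(m : ℂ)‖ = |(m:ℝ)| := by
    rw [← Complex.ofReal_intCast, Complex.norm_real, Real.norm_eq_abs]
  have h2 : ‖(2 * (Real.pi:ℝ) * (I:ℂ))‖ = 2 * Real.pi := by
    rw [norm_mul, Complex.norm_I, mul_one]
    have : (2 * (Real.pi:ℝ) : ℂ) = ((2 * Real.pi : ℝ) : ℂ) := by push_cast; ring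
    rw [this, Complex.norm_real, Real.norm_eq_abs, abs_of_pos (by positivity)]
  rw [h1, h2]
  have : (1:ℝ) ≤ |(m:ℝ)| := by
    rw [← Int.cast_abs]
    exact_mod_cast Int.one_le_abs hm
  nlinarith [Real.pi_pos]

lemma lat_eq {z w : ℂ} (hz : ∃ m : ℤ, z = m * (2 * (Real.pi:ℝ) * I))
    (hw : ∃ m : ℤ, w = m * (2 * (Real.pi:ℝ) * I)) (h : ‖z - w‖ < 2 * Real.pi) : z = w := by
  obtain ⟨m, rfl⟩ := hz; obtain ⟨k, rfl⟩ := hw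
  by_contra hne
  have hmk : m - k ≠ 0 := by
    intro h0
    exact hne (by rw [sub_eq_zero] at h0; rw [h0])
  have heq : ((m:ℂ)) * (2 * (Real.pi:ℝ) * I) - k * (2 * (Real.pi:ℝ) * I)
      = ((m - k : ℤ) : ℂ) * (2 * (Real.pi:ℝ) * I) := by push_cast; ring
  rw [heq] at h
  exact absurd h (not_lt.2 (lat_norm _ hmk))

lemma exp_lift_unique {X : Type*} [TopologicalSpace X] [PreconnectedSpace X]
    {g1 g2 : X → ℂ} (h1 : Continuous g1) (h2 : Continuous g2)
    (he : ∀ x, Complex.exp (g1 x) = Complex.exp (g2 x)) {x0 : X} (hx0 : g1 x0 = g2 x0) :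
    ∀ x, g1 x = g2 x := by
  set d : X → ℂ := fun x => g1 x - g2 x with hd
  have hdc : Continuous d := h1.sub h2
  have hlat : ∀ x, ∃ m : ℤ, d x = m * (2 * (Real.pi:ℝ) * I) := by
    intro x
    obtain ⟨n, hn⟩ := Complex.exp_eq_exp_iff_exists_int.1 (he x)
    exact ⟨n, by simp [hd, hn]⟩
  have hU : {x | d x = 0} = d ⁻¹' (Metric.ball 0 (2 * Real.pi)) := by
    ext x
    simp only [Set.mem_setOf_eq, Set.mem_preimage, Metric.mem_ball, dist_zero_right]
    constructor
    · intro h; rw [h]; simpa using Real.two_pi_pos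
    · intro h
      obtain ⟨m, hm⟩ := hlat x
      rcases eq_or_ne m 0 with rfl | hm0
      · simpa using hm
      · rw [hm] at h; exact absurd h (not_lt.2 (lat_norm _ hm0))
  have hUopen : IsOpen {x | d x = 0} := hU ▸ (Metric.isOpen_ball.preimage hdc)
  have hVopen : IsOpen {x | d x ≠ 0} := by
    rw [isOpen_iff_mem_nhds]
    intro x hx
    have hball : d ⁻¹' (Metric.ball (d x) (2 * Real.pi)) ∈ nhds x :=
      (Metric.isOpen_ball.preimage hdc).mem_nhds (by simpa using Real.two_pi_pos)
    filter_upwards [hball] with y hy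
    have heq : d y = d x := lat_eq (hlat y) (hlat x) (by simpa [dist_eq_norm] using hy)
    show d y ≠ 0
    rw [heq]; exact hx
  have hclopen : IsClopen {x | d x = 0} := by
    constructor
    · have : {x | d x = 0} = {x | d x ≠ 0}ᶜ := by ext x; simp
      rw [this]; exact hVopen.isClosed_compl
    · exact hUopen
  rcases isClopen_iff.1 hclopen with h | h
  · exfalso
    have : x0 ∈ {x | d x = 0} := by simp [hd, sub_eq_zero, hx0]
    rw [h] at this; exact this
  · intro x
    have : x ∈ {x | d x = 0} := by rw [h]; trivial
    simpa [hd, sub_eq_zero] using this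

lemma additive_linear (K : ℝ → ℂ) (hK : Continuous K)
    (hadd : ∀ x y : ℝ, 0 ≤ x → 0 ≤ y → K (x + y) = K x + K y) :
    ∀ x : ℝ, 0 ≤ x → K x = (x : ℂ) * K 1 := by
  have hK0 : K 0 = 0 := by
    have := hadd 0 0 le_rfl le_rfl
    simpa using this.symm
  have hnat : ∀ (n : ℕ) (x : ℝ), 0 ≤ x → K (n * x) = n * K x := by
    intro n
    induction n with
    | zero => intro x hx; simpa using hK0
    | succ n ih =>
      intro x hx
      have hh : ((n:ℝ) + 1) * x = n * x + x := by ring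
      push_cast
      rw [hh, hadd _ _ (by positivity) hx, ih x hx]
      push_cast; ring
  have hq : ∀ q : ℚ, 0 ≤ q → K q = ((q:ℝ) : ℂ) * K 1 := by
    intro q hq0
    have hnn : (0:ℤ) ≤ q.num := Rat.num_nonneg.2 hq0
    have hx : (0:ℝ) ≤ (q:ℝ) := by exact_mod_cast hq0
    have hk : ((q.num.toNat : ℝ)) = (q.num : ℝ) := by exact_mod_cast Int.toNat_of_nonneg hnn
    have h2 : (q.den : ℝ) * (q:ℝ) = (q.num.toNat : ℝ) := by
      rw [hk, mul_comm]
      exact_mod_cast Rat.mul_den_eq_num q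
    have h1 : K ((q.den:ℝ) * (q:ℝ)) = (q.den:ℂ) * K q := hnat q.den (q:ℝ) hx
    have h3 : K ((q.num.toNat : ℝ)) = (q.num.toNat:ℂ) * K 1 := by
      have := hnat q.num.toNat 1 zero_le_one
      simpa using this
    rw [h2, h3] at h1
    have hcast : (q.num.toNat:ℂ) = ((q:ℝ):ℂ) * (q.den:ℂ) := by
      have : (q.num.toNat : ℝ) = (q:ℝ) * (q.den:ℝ) := by rw [← h2]; ring
      exact_mod_cast this
    have hdne : (q.den : ℂ) ≠ 0 := by exact_mod_cast q.den_nz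
    apply mul_left_cancel₀ hdne
    rw [← h1, hcast]; ring
  intro x hx
  have hseq : ∀ n : ℕ, ∃ q : ℚ, x < q ∧ (q:ℝ) < x + 1/(n+1) := by
    intro n
    exact exists_rat_btwn (lt_add_of_pos_right x (by positivity))
  choose q hq1 hq2 using hseq
  have hten : Filter.Tendsto (fun n : ℕ => ((q n : ℝ))) Filter.atTop (nhds x) := by
    have h1 : Filter.Tendsto (fun n : ℕ => x + 1/((n:ℝ)+1)) Filter.atTop (nhds x) := by
      have h0 := tendsto_one_div_add_atTop_nhds_zero_nat (𝕜 := ℝ)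
      have h2 := Filter.Tendsto.const_add x h0
      simpa using h2
    exact tendsto_of_tendsto_of_tendsto_of_le_of_le (tendsto_const_nhds)
      h1 (fun n => (hq1 n).le) (fun n => (hq2 n).le)
  have hKl : Filter.Tendsto (fun n : ℕ => K (q n)) Filter.atTop (nhds (K x)) :=
    (hK.continuousAt.tendsto).comp hten
  have hKl2 : Filter.Tendsto (fun n : ℕ => K (q n)) Filter.atTop (nhds ((x:ℂ) * K 1)) := by
    have heq : ∀ n, K (q n) = ((q n : ℝ) : ℂ) * K 1 := by
      intro n
      have hnn : (0:ℚ) ≤ q n := by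
        have h := hq1 n
        have : (0:ℝ) < q n := lt_of_le_of_lt hx h
        exact_mod_cast this.le
      exact hq (q n) hnn
    simp only [heq]
    exact (Filter.Tendsto.mul (Complex.continuous_ofReal.continuousAt.tendsto.comp hten)
      tendsto_const_nhds)
  exact tendsto_nhds_unique hKl hKl2

set_option maxHeartbeats 1000000 in
lemma exists_continuous_log (h : ℂ → ℂ) (hc : Continuous h) (hne : ∀ z, h z ≠ 0) :
    ∃ g : ℂ → ℂ, Continuous g ∧ ∀ z, Complex.exp (g z) = h z := by
  classical
  set q : ℕ → ℂ → ℕ → ℂ := fun n z k => h ((((k:ℝ)/(n:ℝ) : ℝ) : ℂ) * z) with hq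
  set gn : ℕ → ℂ → ℂ := fun n z =>
    Complex.log (h 0) + ∑ k ∈ Finset.range n, Complex.log (q n z (k+1) / q n z k) with hgn
  have hq0 : ∀ n z, q n z 0 = h 0 := by intro n z; simp [hq]
  have hqn : ∀ n, n ≠ 0 → ∀ z, q n z n = h z := by
    intro n hn z
    have hd : ((n:ℝ)/(n:ℝ) : ℝ) = 1 := div_self (by exact_mod_cast hn)
    have hd2 : ((((n:ℝ)/(n:ℝ) : ℝ)) : ℂ) * z = z := by rw [hd]; simp
    simp only [hq]
    rw [hd2]
  have hexp : ∀ n, n ≠ 0 → ∀ z, Complex.exp (gn n z) = h z := by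
    intro n hn z
    have aux : ∀ j, Complex.exp (Complex.log (h 0)
        + ∑ k ∈ Finset.range j, Complex.log (q n z (k+1) / q n z k)) = q n z j := by
      intro j
      induction j with
      | zero => simp [Complex.exp_log (hne 0), hq0]
      | succ j ih =>
        rw [Finset.sum_range_succ, ← add_assoc, Complex.exp_add, ih,
          Complex.exp_log (div_ne_zero (hne _) (hne _))]
        exact mul_div_cancel₀ _ (hne _)
    have := aux n
    rw [hqn n hn z] at this
    exact this
  have hgn0 : ∀ n, gn n 0 = Complex.log (h 0) := by
    intro n
    have hdd : ∀ k : ℕ, q n (0:ℂ) (k+1) / q n (0:ℂ) k = 1 := by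
      intro k
      simp only [hq, mul_zero]
      exact div_self (hne 0)
    simp [hgn, hdd]
  have key : ∀ j : ℕ, ∃ G : ℂ → ℂ, ContinuousOn G (Metric.ball 0 ((j:ℝ)+1)) ∧
      (∀ z, Complex.exp (G z) = h z) ∧ G 0 = Complex.log (h 0) := by
    intro j
    set R : ℝ := (j:ℝ) + 1 with hR
    have hRpos : 0 < R := by positivity
    have hKc : IsCompact ((Metric.closedBall (0:ℂ) R) ×ˢ (Metric.closedBall (0:ℂ) R)) :=
      (isCompact_closedBall _ _).prod (isCompact_closedBall _ _)
    have hφ : ContinuousOn (fun p : ℂ × ℂ => h p.1 / h p.2)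
        ((Metric.closedBall (0:ℂ) R) ×ˢ (Metric.closedBall (0:ℂ) R)) :=
      ((hc.comp continuous_fst).continuousOn).div
        ((hc.comp continuous_snd).continuousOn) (fun p _ => hne _)
    have huc := hKc.uniformContinuousOn_of_continuous hφ
    rw [Metric.uniformContinuousOn_iff] at huc
    obtain ⟨δ, hδ, hucd⟩ := huc (1/2) (by norm_num)
    obtain ⟨n, hn⟩ := exists_nat_gt (R/δ)
    have hnpos : (0:ℝ) < n := lt_trans (by positivity) hn
    have hn0 : n ≠ 0 := by exact_mod_cast hnpos.ne'
    have hmem : ∀ z : ℂ, ‖z‖ < R → ∀ c : ℝ, 0 ≤ c → c ≤ 1 →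
        ((c:ℂ) * z) ∈ Metric.closedBall (0:ℂ) R := by
      intro z hz c hc0 hc1
      rw [Metric.mem_closedBall, dist_zero_right, norm_mul]
      have hcn : ‖(c:ℂ)‖ = c := by
        rw [Complex.norm_real, Real.norm_eq_abs, _root_.abs_of_nonneg hc0]
      rw [hcn]
      nlinarith [norm_nonneg z]
    have hfine : ∀ z : ℂ, ‖z‖ < R → ∀ k : ℕ, k < n →
        ‖q n z (k+1) / q n z k - 1‖ < 1/2 := by
      intro z hz k hk
      set s1 : ℝ := ((k:ℝ)+1)/(n:ℝ) with hs1
      set s2 : ℝ := (k:ℝ)/(n:ℝ) with hs2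
      have e1 : (((k+1:ℕ):ℝ)/(n:ℝ)) = s1 := by rw [hs1]; push_cast; ring
      have eq1 : q n z (k+1) = h ((s1:ℂ) * z) := by simp only [hq, e1]
      have eq2 : q n z k = h ((s2:ℂ) * z) := by simp only [hq, hs2]
      have hk1n : s1 ≤ 1 := by
        rw [hs1, div_le_one hnpos]
        exact_mod_cast Nat.succ_le_of_lt hk
      have hkn' : (k:ℝ) ≤ (n:ℝ) := by
        rw [hs1, div_le_one hnpos] at hk1n; linarith
      have hs2le : s2 ≤ 1 := by rw [hs2, div_le_one hnpos]; exact hkn'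
      have hm1 := hmem z hz s1 (by rw [hs1]; positivity) hk1n
      have hm2 := hmem z hz s2 (by rw [hs2]; positivity) hs2le
      have hdlt : dist (((s1:ℂ) * z, (s2:ℂ) * z)) (((s2:ℂ) * z, (s2:ℂ) * z)) < δ := by
        rw [Prod.dist_eq]
        simp only [dist_self]
        have hd0 : dist ((s1:ℂ) * z) ((s2:ℂ) * z) = ‖z‖ / n := by
          rw [dist_eq_norm]
          have hsub : (s1:ℂ) * z - (s2:ℂ) * z = (((1/(n:ℝ)) : ℝ):ℂ) * z := by
            have hss : s1 - s2 = 1/(n:ℝ) := by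
              rw [hs1, hs2]; field_simp; ring
            have : (s1:ℂ) - (s2:ℂ) = (((1/(n:ℝ)) : ℝ):ℂ) := by
              rw [← Complex.ofReal_sub, hss]
            rw [← this]; ring
          rw [hsub, norm_mul]
          have h1 : ‖(((1/(n:ℝ)) : ℝ):ℂ)‖ = 1/n := by
            rw [Complex.norm_real, Real.norm_eq_abs, _root_.abs_of_pos (by positivity)]
          rw [h1]; ring
        have hRn : R / n < δ := by
          rw [div_lt_iff₀ hnpos]
          rw [div_lt_iff₀ hδ] at hn
          linarith
        have hzn : ‖z‖ / n < R / n := by gcongr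
        rw [hd0]
        have : ‖z‖ / n ⊔ 0 = ‖z‖ / n := sup_eq_left.2 (by positivity)
        rw [this]
        linarith
      have hkey := hucd ((s1:ℂ) * z, (s2:ℂ) * z) (Set.mem_prod.2 ⟨hm1, hm2⟩)
        ((s2:ℂ) * z, (s2:ℂ) * z) (Set.mem_prod.2 ⟨hm2, hm2⟩) hdlt
      simp only at hkey
      rw [div_self (hne ((s2:ℂ) * z)), dist_eq_norm] at hkey
      rw [eq1, eq2]
      exact hkey
    refine ⟨gn n, ?_, hexp n hn0, hgn0 n⟩
    refine ContinuousOn.add continuousOn_const (continuousOn_finset_sum _ fun k hk => ?_)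
    intro z hz
    have hz' : ‖z‖ < R := by
      rw [Metric.mem_ball, dist_zero_right] at hz; exact hz
    apply ContinuousAt.continuousWithinAt
    have hψ : Continuous (fun z => q n z (k+1) / q n z k) := by
      simp only [hq]
      exact ((hc.comp (continuous_const.mul continuous_id)).div
        (hc.comp (continuous_const.mul continuous_id)) (fun z => hne _))
    have hslit : q n z (k+1) / q n z k ∈ Complex.slitPlane := by
      rw [Complex.mem_slitPlane_iff]
      left
      have hf := hfine z hz' k (Finset.mem_range.1 hk)
      have hre : |(q n z (k+1) / q n z k - 1).re| ≤ ‖q n z (k+1) / q n z k - 1‖ := by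
        exact Complex.abs_re_le_norm _
      have : (q n z (k+1) / q n z k - 1).re = (q n z (k+1) / q n z k).re - 1 := by
        simp [Complex.sub_re]
      rw [this] at hre
      have := abs_le.1 (le_trans hre hf.le)
      linarith [this.1]
    exact Filter.Tendsto.clog hψ.continuousAt hslit
  choose G hGc hGe hG0 using key
  have agree : ∀ (a b : ℕ), a ≤ b → ∀ z ∈ Metric.ball (0:ℂ) ((a:ℝ)+1), G a z = G b z := by
    intro a b hab z hz
    have hpc : IsPreconnected (Metric.ball (0:ℂ) ((a:ℝ)+1)) := (convex_ball _ _).isPreconnected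
    haveI := Subtype.preconnectedSpace hpc
    have hsub : Metric.ball (0:ℂ) ((a:ℝ)+1) ⊆ Metric.ball (0:ℂ) ((b:ℝ)+1) :=
      Metric.ball_subset_ball (by
        have : (a:ℝ) ≤ b := by exact_mod_cast hab
        linarith)
    have h0mem : (0:ℂ) ∈ Metric.ball (0:ℂ) ((a:ℝ)+1) := by
      rw [Metric.mem_ball, dist_self]; positivity
    have huniq := exp_lift_unique (X := (Metric.ball (0:ℂ) ((a:ℝ)+1) : Set ℂ))
      (g1 := (Metric.ball (0:ℂ) ((a:ℝ)+1)).restrict (G a))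
      (g2 := (Metric.ball (0:ℂ) ((a:ℝ)+1)).restrict (G b))
      ((hGc a).restrict) (((hGc b).mono hsub).restrict)
      (fun x => (hGe a x).trans (hGe b x).symm)
      (x0 := ⟨0, h0mem⟩) ((hG0 a).trans (hG0 b).symm)
    exact huniq ⟨z, hz⟩
  refine ⟨fun z => G ⌈‖z‖⌉₊ z, ?_, fun z => hGe _ z⟩
  rw [continuous_iff_continuousAt]
  intro z0
  set J := ⌈‖z0‖⌉₊ with hJ
  have hz0 : z0 ∈ Metric.ball (0:ℂ) ((J:ℝ)+1) := by
    rw [Metric.mem_ball, dist_zero_right]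
    have := Nat.le_ceil ‖z0‖
    linarith
  have hclaim : ∀ z ∈ Metric.ball (0:ℂ) ((J:ℝ)+1), G ⌈‖z‖⌉₊ z = G J z := by
    intro z hz
    rcases le_total (⌈‖z‖⌉₊) J with hle | hle
    · apply agree _ _ hle
      rw [Metric.mem_ball, dist_zero_right]
      have := Nat.le_ceil ‖z‖
      linarith
    · exact (agree _ _ hle z hz).symm
  exact ((hGc J).continuousAt (Metric.isOpen_ball.mem_nhds hz0)).congr
    (Filter.eventuallyEq_of_mem (Metric.isOpen_ball.mem_nhds hz0)
      (fun z hz => (hclaim z hz).symm))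

set_option maxHeartbeats 1000000 in
theorem schrodinger_2d_functional_equation
    (f : EuclideanSpace ℝ (Fin 2) → ℂ)
    (F : ℝ × EuclideanSpace ℝ (Fin 2) → ℂ)
    (hf : Continuous f)
    (hF : ContinuousOn F {p : ℝ × EuclideanSpace ℝ (Fin 2) | ‖p.2‖^2 ≤ 2 * p.1})
    (hfne : ∀ x, f x ≠ 0)
    (hFne : ∀ p : ℝ × EuclideanSpace ℝ (Fin 2), ‖p.2‖^2 ≤ 2 * p.1 → F p ≠ 0)
    (heq : ∀ x y : EuclideanSpace ℝ (Fin 2),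
      f x * f y = F (‖x‖^2 + ‖y‖^2, x + y)) :
    ∃ (A C : ℂ) (b : Fin 2 → ℂ),
      (∀ x : EuclideanSpace ℝ (Fin 2),
        f x = Complex.exp (A * ‖x‖^2 + (∑ i, b i * (x i)) + C)) ∧
      (∀ (t : ℝ) (v : EuclideanSpace ℝ (Fin 2)), ‖v‖^2 < 2 * t →
        F (t, v) = Complex.exp (A * t + (∑ i, b i * (v i)) + 2 * C)) := by
  classical
  set m : ℂ → EuclideanSpace ℝ (Fin 2) :=
    fun z => (EuclideanSpace.equiv (Fin 2) ℝ).symm ![z.re, z.im] with hm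
  have hm0 : ∀ z, m z 0 = z.re := fun z => rfl
  have hm1 : ∀ z, m z 1 = z.im := fun z => rfl
  have hm_add : ∀ z w, m (z + w) = m z + m w := by
    intro z w
    ext i
    fin_cases i
    · simp [hm0, Complex.add_re]
    · simp [hm1, Complex.add_im]
  have hm_cont : Continuous m := by
    apply (EuclideanSpace.equiv (Fin 2) ℝ).symm.continuous.comp
    apply continuous_pi
    intro i
    fin_cases i
    · exact Complex.continuous_re
    · exact Complex.continuous_im
  have hE : ∀ x : EuclideanSpace ℝ (Fin 2), ‖x‖^2 = (x 0)^2 + (x 1)^2 := by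
    intro x
    rw [EuclideanSpace.norm_eq, Real.sq_sqrt (by positivity)]
    rw [Fin.sum_univ_two]
    simp [Real.norm_eq_abs, sq_abs]
  have hm_norm : ∀ z, ‖m z‖^2 = Complex.normSq z := by
    intro z
    rw [hE, hm0, hm1, Complex.normSq_apply]
    ring
  have hmn : ∀ x : EuclideanSpace ℝ (Fin 2), m ((x 0 : ℂ) + (x 1 : ℂ) * I) = x := by
    intro x
    ext i
    fin_cases i
    · simp [hm0]
    · simp [hm1]
  set h : ℂ → ℂ := fun z => f (m z) with hh
  have hhc : Continuous h := hf.comp hm_cont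
  have hhne : ∀ z, h z ≠ 0 := fun z => hfne _
  -- parallelogram for normSq
  have hpar : ∀ p q : ℂ, Complex.normSq (p + q) + Complex.normSq (p - q)
      = 2 * Complex.normSq p + 2 * Complex.normSq q := by
    intro p q
    simp only [Complex.normSq_apply, Complex.add_re, Complex.add_im, Complex.sub_re,
      Complex.sub_im]
    ring
  -- rotation invariance (multiplicative)
  have hL1 : ∀ a w w' : ℂ, Complex.normSq w' = Complex.normSq w →
      h (a + w) * h (a - w) = h (a + w') * h (a - w') := by
    have hpairF : ∀ a w : ℂ, h (a + w) * h (a - w)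
        = F (2 * Complex.normSq a + 2 * Complex.normSq w, m (a + a)) := by
      intro a w
      have h1 := heq (m (a + w)) (m (a - w))
      rw [hm_norm, hm_norm, ← hm_add] at h1
      have c1 : (a + w) + (a - w) = a + a := by ring
      rw [c1, hpar] at h1
      exact h1
    intro a w w' hw
    rw [hpairF, hpairF, hw]
  obtain ⟨g, hgc, hge⟩ := exists_continuous_log h hhc hhne
  -- additive rotation invariance
  have hL3 : ∀ a w w' : ℂ, Complex.normSq w' = Complex.normSq w →
      g (a + w') + g (a - w') = g (a + w) + g (a - w) := by
    intro a w w' hw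
    rcases eq_or_ne w 0 with rfl | hw0
    · have : w' = 0 := by
        rw [Complex.normSq_zero] at hw
        exact Complex.normSq_eq_zero.1 hw
      rw [this]
    · have habsw : ‖w'‖ = ‖w‖ := by
        rw [Complex.norm_def, Complex.norm_def, hw]
      have hwne : ‖w‖ ≠ 0 := by
        simpa using hw0
      set u : ℂ := w' / w with hu
      have habsu : ‖u‖ = 1 := by
        rw [hu, norm_div, habsw, div_self hwne]
      have hθ : Complex.exp ((u.arg : ℂ) * I) = u := by
        have := Complex.norm_mul_exp_arg_mul_I u
        rw [habsu] at this
        simpa using this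
      have hw' : w' = w * u := by
        rw [hu]
        field_simp
      set φ : ℝ → ℂ := fun t => g (a + w * Complex.exp ((t:ℂ) * I))
        + g (a - w * Complex.exp ((t:ℂ) * I)) with hφ
      have hexpcont : Continuous fun t : ℝ => Complex.exp ((t:ℂ) * I) :=
        Complex.continuous_exp.comp (Complex.continuous_ofReal.mul continuous_const)
      have hφc : Continuous φ :=
        (hgc.comp (continuous_const.add (continuous_const.mul hexpcont))).add
          (hgc.comp (continuous_const.sub (continuous_const.mul hexpcont)))
      have hnsq : ∀ t : ℝ, Complex.normSq (w * Complex.exp ((t:ℂ) * I)) = Complex.normSq w := by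
        intro t
        rw [Complex.normSq_mul]
        have habs1 : ‖Complex.exp ((t:ℂ) * I)‖ = 1 :=
          Complex.norm_exp_ofReal_mul_I t
        have : Complex.normSq (Complex.exp ((t:ℂ) * I)) = 1 := by
          rw [← Complex.sq_norm, habs1]; norm_num
        rw [this, mul_one]
      have hφe : ∀ t, Complex.exp (φ t) = Complex.exp (φ 0) := by
        intro t
        have e0 : Complex.exp (((0:ℝ):ℂ) * I) = 1 := by norm_num
        rw [hφ]
        simp only
        rw [Complex.exp_add, Complex.exp_add, hge, hge, hge, hge, e0, mul_one]
        exact (hL1 a w (w * Complex.exp ((t:ℂ) * I)) (hnsq t)).symm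
      have hconst := exp_lift_unique hφc (continuous_const : Continuous fun _ : ℝ => φ 0)
        (fun t => hφe t) (x0 := (0:ℝ)) rfl
      have hθφ := hconst u.arg
      rw [hφ] at hθφ
      simp only at hθφ
      rw [hθ] at hθφ
      rw [hw']
      have e0 : Complex.exp (((0:ℝ):ℂ) * I) = 1 := by norm_num
      rw [e0, mul_one] at hθφ
      exact hθφ
  -- bridge to real offsets
  have hbridge : ∀ a w : ℂ, g (a + w) + g (a - w)
      = g (a + ((Real.sqrt (Complex.normSq w) : ℝ) : ℂ))
        + g (a - ((Real.sqrt (Complex.normSq w) : ℝ) : ℂ)) := by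
    intro a w
    apply (hL3 a w _ _).symm
    rw [Complex.normSq_ofReal]
    exact Real.mul_self_sqrt (Complex.normSq_nonneg w)
  -- T-identity
  have hT : ∀ (a : ℂ) (s t : ℝ),
      (g (a + ((s+t : ℝ):ℂ)) + g (a - ((s+t:ℝ):ℂ)))
        + (g (a + ((s-t:ℝ):ℂ)) + g (a - ((s-t:ℝ):ℂ)))
      = 2 * (g (a + ((Real.sqrt (s^2+t^2) : ℝ):ℂ)) + g (a - ((Real.sqrt (s^2+t^2):ℝ):ℂ))) := by
    intro a s t
    have c1 : a + ((s+t : ℝ):ℂ) = (a + (s:ℂ)) + (t:ℂ) := by push_cast; ring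
    have c2 : a - ((s+t : ℝ):ℂ) = (a - (s:ℂ)) - (t:ℂ) := by push_cast; ring
    have c3 : a + ((s-t : ℝ):ℂ) = (a + (s:ℂ)) - (t:ℂ) := by push_cast; ring
    have c4 : a - ((s-t : ℝ):ℂ) = (a - (s:ℂ)) + (t:ℂ) := by push_cast; ring
    rw [c1, c2, c3, c4]
    have hnsqtI : Complex.normSq ((t:ℂ) * I) = Complex.normSq ((t:ℝ):ℂ) := by
      rw [Complex.normSq_mul, Complex.normSq_I, mul_one]
    have e2 := hL3 (a + (s:ℂ)) ((t:ℝ):ℂ) ((t:ℂ) * I) hnsqtI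
    have e3 := hL3 (a - (s:ℂ)) ((t:ℝ):ℂ) ((t:ℂ) * I) hnsqtI
    have c5 : (a + (s:ℂ)) + (t:ℂ)*I = a + ((s:ℂ) + (t:ℂ)*I) := by ring
    have c6 : (a - (s:ℂ)) - (t:ℂ)*I = a - ((s:ℂ) + (t:ℂ)*I) := by ring
    have c7 : (a + (s:ℂ)) - (t:ℂ)*I = a + ((s:ℂ) - (t:ℂ)*I) := by ring
    have c8 : (a - (s:ℂ)) + (t:ℂ)*I = a - ((s:ℂ) - (t:ℂ)*I) := by ring
    rw [c5, c7] at e2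
    rw [c8, c6] at e3
    have hnorm1 : Complex.normSq ((Real.sqrt (s^2+t^2) : ℝ):ℂ)
        = Complex.normSq ((s:ℂ) + (t:ℂ)*I) := by
      rw [Complex.normSq_ofReal, Real.mul_self_sqrt (by positivity : (0:ℝ) ≤ s^2+t^2)]
      simp [Complex.normSq_apply]
      ring
    have hnorm2 : Complex.normSq ((Real.sqrt (s^2+t^2) : ℝ):ℂ)
        = Complex.normSq ((s:ℂ) - (t:ℂ)*I) := by
      rw [Complex.normSq_ofReal, Real.mul_self_sqrt (by positivity : (0:ℝ) ≤ s^2+t^2)]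
      simp [Complex.normSq_apply]
      ring
    have e6 := hL3 a ((s:ℂ) + (t:ℂ)*I) ((Real.sqrt (s^2+t^2) : ℝ):ℂ) hnorm1
    have e7 := hL3 a ((s:ℂ) - (t:ℂ)*I) ((Real.sqrt (s^2+t^2) : ℝ):ℂ) hnorm2
    linear_combination (-1 : ℂ)*e2 - e3 - e6 - e7
  -- (★): the quadratic identity
  set c : ℂ → ℂ := fun a => g (a+1) + g (a-1) - 2 * g a with hcdef
  have hstar : ∀ a w : ℂ, g (a+w) + g (a-w) = 2 * g a + c a * (Complex.normSq w : ℂ) := by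
    intro a w
    set K : ℝ → ℂ := fun x =>
      (g (a + ((Real.sqrt x : ℝ):ℂ)) + g (a - ((Real.sqrt x : ℝ):ℂ))) - 2 * g a with hKdef
    have hKc : Continuous K := by
      have h1 : Continuous fun x : ℝ => ((Real.sqrt x : ℝ):ℂ) :=
        Complex.continuous_ofReal.comp Real.continuous_sqrt
      exact (((hgc.comp (continuous_const.add h1)).add
        (hgc.comp (continuous_const.sub h1))).sub continuous_const)
    have hmid : ∀ x y : ℝ, 0 ≤ x → 0 ≤ y →
        (g (a+((Real.sqrt x:ℝ):ℂ))+g (a-((Real.sqrt x:ℝ):ℂ)))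
          + (g (a+((Real.sqrt y:ℝ):ℂ))+g (a-((Real.sqrt y:ℝ):ℂ)))
        = 2*(g (a+((Real.sqrt ((x+y)/2):ℝ):ℂ)) + g (a-((Real.sqrt ((x+y)/2):ℝ):ℂ))) := by
      intro x y hx hy
      have hs := hT a ((Real.sqrt x + Real.sqrt y)/2) ((Real.sqrt x - Real.sqrt y)/2)
      have c1 : (Real.sqrt x + Real.sqrt y)/2 + (Real.sqrt x - Real.sqrt y)/2 = Real.sqrt x := by
        ring
      have c2 : (Real.sqrt x + Real.sqrt y)/2 - (Real.sqrt x - Real.sqrt y)/2 = Real.sqrt y := by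
        ring
      have c3 : ((Real.sqrt x + Real.sqrt y)/2)^2 + ((Real.sqrt x - Real.sqrt y)/2)^2
          = (x+y)/2 := by
        have hx2 : (Real.sqrt x)^2 = x := Real.sq_sqrt hx
        have hy2 : (Real.sqrt y)^2 = y := Real.sq_sqrt hy
        nlinarith [hx2, hy2]
      rw [c1, c2, c3] at hs
      exact hs
    have hKadd : ∀ x y : ℝ, 0 ≤ x → 0 ≤ y → K (x+y) = K x + K y := by
      intro x y hx hy
      have h1 := hmid x y hx hy
      have h2 := hmid (x+y) 0 (by linarith) le_rfl
      rw [Real.sqrt_zero] at h2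
      have c0 : ((0:ℝ):ℂ) = 0 := by norm_num
      rw [c0, add_zero, sub_zero] at h2
      have c1 : (x+y+0)/2 = (x+y)/2 := by ring
      rw [c1] at h2
      simp only [hKdef]
      linear_combination h2 - h1
    have hK1 : K 1 = c a := by
      simp only [hKdef, hcdef]
      rw [Real.sqrt_one, Complex.ofReal_one]
    have hKν := additive_linear K hKc hKadd (Complex.normSq w) (Complex.normSq_nonneg w)
    rw [hK1] at hKν
    simp only [hKdef] at hKν
    rw [hbridge a w]
    linear_combination hKν
  -- c is midpoint affine
  have hc_mid : ∀ a w : ℂ, c (a+w) + c (a-w) = 2 * c a := by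
    intro a w
    rcases eq_or_ne w 0 with rfl | hw
    · rw [add_zero, sub_zero]; ring
    · have hν : ((Complex.normSq w : ℝ):ℂ) ≠ 0 := by
        rw [Complex.ofReal_ne_zero]
        exact (Complex.normSq_pos.2 hw).ne'
      have e1 := hstar (a+w) w
      have e2 := hstar (a-w) w
      have e3 := hstar a w
      have e4 := hstar a (w+w)
      have c1 : (a+w)+w = a+(w+w) := by ring
      have c2 : (a+w)-w = a := by ring
      have c3 : (a-w)+w = a := by ring
      have c4 : (a-w)-w = a-(w+w) := by ring
      rw [c1, c2] at e1
      rw [c3, c4] at e2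
      have hν4 : ((Complex.normSq (w+w) : ℝ):ℂ) = 4 * ((Complex.normSq w : ℝ):ℂ) := by
        have hr : Complex.normSq (w+w) = 4 * Complex.normSq w := by
          simp only [Complex.normSq_apply, Complex.add_re, Complex.add_im]; ring
        rw [hr]; push_cast; ring
      rw [hν4] at e4
      have hgoal : (c (a+w) + c (a-w)) * ((Complex.normSq w : ℝ):ℂ)
          = (2 * c a) * ((Complex.normSq w : ℝ):ℂ) := by
        linear_combination (-1 : ℂ)*e1 - e2 - 2*e3 + e4
      exact mul_right_cancel₀ hν hgoal
  -- M is additive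
  set M : ℂ → ℂ := fun z => c z - c 0 with hMdef
  have hM0 : M 0 = 0 := by simp [hMdef]
  have hM : ∀ x y : ℂ, M (x+y) = M x + M y := by
    intro x y
    have half := hc_mid ((x+y)/2) ((x+y)/2)
    rw [show (x+y)/2 + (x+y)/2 = x + y by ring, show (x+y)/2 - (x+y)/2 = (0:ℂ) by ring] at half
    have pair := hc_mid ((x+y)/2) ((x-y)/2)
    rw [show (x+y)/2 + (x-y)/2 = x by ring, show (x+y)/2 - (x-y)/2 = y by ring] at pair
    simp only [hMdef]
    linear_combination half - pair
  have hMneg : ∀ x : ℂ, M (-x) = - M x := by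
    intro x
    have := hM x (-x)
    rw [show x + (-x) = (0:ℂ) by ring, hM0] at this
    linear_combination -this
  -- odd part
  set o : ℂ → ℂ := fun z => g z - g (-z) with hodef
  have hν_cast : ∀ x y : ℂ, ((Complex.normSq (x+y) : ℝ):ℂ)
      = ((Complex.normSq x : ℝ):ℂ) + ((Complex.normSq y : ℝ):ℂ)
        + 2 * (((x * (starRingEnd ℂ) y).re : ℝ):ℂ) := by
    intro x y
    have := Complex.normSq_add x y
    rw [this]
    push_cast
    ring
  have ho' : ∀ a w : ℂ, o (a+w) + o (a-w) = 2 * o a + (2 * M a) * ((Complex.normSq w : ℝ):ℂ) := by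
    intro a w
    have e1 := hstar a w
    have e2 := hstar (-a) w
    rw [show -a + w = -(a-w) by ring, show -a - w = -(a+w) by ring] at e2
    have ha : c a - c (-a) = 2 * M a := by
      have h1 := hMneg a
      simp only [hMdef] at h1
      linear_combination -h1
    simp only [hodef]
    linear_combination e1 - e2 + ((Complex.normSq w : ℝ):ℂ) * ha
  have hdag : ∀ a w : ℂ, o (a+w) = o a + o w
      + M a * ((Complex.normSq w : ℝ):ℂ) + M w * ((Complex.normSq a : ℝ):ℂ) := by
    intro a w
    have e1 := ho' a w
    have e2 := ho' w a
    rw [show w + a = a + w by ring] at e2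
    have hz : o (a-w) + o (w-a) = 0 := by
      simp only [hodef]
      rw [show -(a-w) = w - a by ring, show -(w-a) = a - w by ring]
      ring
    linear_combination (1/2 : ℂ)*e1 + (1/2 : ℂ)*e2 - (1/2 : ℂ)*hz
  -- M vanishes
  have hassoc : ∀ a w u : ℂ, M u * (((a * (starRingEnd ℂ) w).re : ℝ):ℂ)
      = M a * (((w * (starRingEnd ℂ) u).re : ℝ):ℂ) := by
    intro a w u
    have e1 := hdag (a+w) u
    rw [hM a w, hν_cast a w] at e1
    have e2 := hdag a w
    have e3 := hdag a (w+u)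
    rw [hM w u, hν_cast w u, show a + (w+u) = (a+w)+u by ring] at e3
    have e4 := hdag w u
    linear_combination (-1/2 : ℂ)*e1 - (1/2:ℂ)*e2 + (1/2:ℂ)*e3 + (1/2:ℂ)*e4
  have hMzero : ∀ z : ℂ, M z = 0 := by
    have hMI : ∀ z : ℂ, z ≠ 0 → M (I*z) = 0 := by
      intro z hz
      have hs := hassoc z z (I*z)
      have hip1 : ((z * (starRingEnd ℂ) z).re : ℝ) = Complex.normSq z := by
        rw [Complex.mul_conj]
        simp
      have hip2 : ((z * (starRingEnd ℂ) (I*z)).re : ℝ) = 0 := by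
        have h1 : z * ((starRingEnd ℂ) (I*z)) = -I * ((Complex.normSq z : ℝ):ℂ) := by
          rw [map_mul, Complex.conj_I]
          have : z * (-I * (starRingEnd ℂ) z) = -I * (z * (starRingEnd ℂ) z) := by ring
          rw [this, Complex.mul_conj]
        rw [h1]
        simp
      rw [hip1, hip2] at hs
      simp only [Complex.ofReal_zero, mul_zero] at hs
      have hν : ((Complex.normSq z : ℝ):ℂ) ≠ 0 := by
        rw [Complex.ofReal_ne_zero]
        exact (Complex.normSq_pos.2 hz).ne'
      exact (mul_eq_zero.1 hs).resolve_right hν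
    intro z
    rcases eq_or_ne z 0 with rfl | hz
    · exact hM0
    · have h1 : I * (-I * z) = z := by
        rw [show I * (-I * z) = -(I*I) * z by ring, Complex.I_mul_I]
        ring
      have h2 : (-I * z) ≠ 0 := by
        apply mul_ne_zero _ hz
        simp [Complex.I_ne_zero]
      have := hMI (-I * z) h2
      rw [h1] at this
      exact this
  -- o is additive, hence real-linear
  have hoadd : ∀ x y : ℂ, o (x+y) = o x + o y := by
    intro x y
    have := hdag x y
    rw [hMzero x, hMzero y] at this
    simpa using this
  have hocont : Continuous o := hgc.sub (hgc.comp continuous_neg)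
  have holin : ∀ (r : ℝ) (z : ℂ), o ((r:ℂ) * z) = (r:ℂ) * o z := by
    intro r z
    have hhom := map_real_smul (AddMonoidHom.mk' o hoadd) hocont r z
    simpa [Complex.real_smul, smul_eq_mul] using hhom
  -- representation of g
  have hg_form : ∀ z : ℂ, g z = g 0 + (c 0 / 2) * ((Complex.normSq z : ℝ):ℂ) + o z / 2 := by
    intro z
    have e1 := hstar 0 z
    rw [zero_add, zero_sub] at e1
    have e2 : o z = g z - g (-z) := by simp [hodef]
    have e3 : c 0 = c 0 := rfl
    linear_combination (1/2:ℂ)*e1 + (1/2:ℂ)*e2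
  refine ⟨c 0 / 2, g 0, ![o 1 / 2, o I / 2], ?_, ?_⟩
  · -- formula for f
    intro x
    set z : ℂ := (x 0 : ℂ) + (x 1 : ℂ) * I with hzdef
    have hx : m z = x := hmn x
    have h1 : f x = Complex.exp (g z) := by
      rw [← hx]
      exact (hge z).symm
    rw [h1]
    congr 1
    have hre : z.re = x 0 := by simp [hzdef]
    have him : z.im = x 1 := by simp [hzdef]
    have hνreal : Complex.normSq z = ‖x‖^2 := by
      rw [Complex.normSq_apply, hre, him, hE]
      ring
    have hνz : ((Complex.normSq z : ℝ):ℂ) = ((‖x‖:ℂ))^2 := by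
      rw [hνreal]
      push_cast
      ring
    have hoz : o z = (x 0 : ℂ) * o 1 + (x 1 : ℂ) * o I := by
      have hsplit : z = ((x 0 : ℝ):ℂ) * 1 + ((x 1 : ℝ):ℂ) * I := by
        rw [hzdef]; ring
      rw [hsplit, hoadd, holin, holin]
    have hsum : (∑ i, (![o 1 / 2, o I / 2]) i * ((x i : ℝ):ℂ))
        = (x 0 : ℂ) * o 1 / 2 + (x 1 : ℂ) * o I / 2 := by
      rw [Fin.sum_univ_two]
      simp [Matrix.cons_val_zero, Matrix.cons_val_one]
      ring
    rw [hg_form z, hνz, hoz, hsum]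
    ring
  · -- formula for F
    intro t v hlt
    set z : ℂ := (v 0 : ℂ) + (v 1 : ℂ) * I with hzdef
    have hx : m z = v := hmn v
    have hre : z.re = v 0 := by simp [hzdef]
    have him : z.im = v 1 := by simp [hzdef]
    have hνz : Complex.normSq z = ‖v‖^2 := by
      rw [hE, Complex.normSq_apply, hre, him]
      ring
    set s : ℝ := Real.sqrt ((2*t - ‖v‖^2)/4) with hsdef
    have hs2 : s^2 = (2*t - ‖v‖^2)/4 := Real.sq_sqrt (by linarith)
    set x1 := m (z/2 + (s:ℂ)) with hx1
    set y1 := m (z/2 - (s:ℂ)) with hy1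
    have hsum1 : x1 + y1 = v := by
      rw [hx1, hy1, ← hm_add, show z/2 + (s:ℂ) + (z/2 - (s:ℂ)) = z by ring, hx]
    have hq2 : Complex.normSq (z/2 + (s:ℂ)) + Complex.normSq (z/2 - (s:ℂ)) = t := by
      rw [hpar]
      have hz2 : Complex.normSq (z/2) = ‖v‖^2/4 := by
        rw [show z/2 = (((1/2:ℝ)):ℂ) * z by push_cast; ring, Complex.normSq_mul,
          Complex.normSq_ofReal, hνz]
        ring
      rw [hz2, Complex.normSq_ofReal]
      have : s * s = (2*t - ‖v‖^2)/4 := by nlinarith [hs2]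
      rw [this]
      ring
    have hnorm1 : ‖x1‖^2 + ‖y1‖^2 = t := by
      rw [hx1, hy1, hm_norm, hm_norm, hq2]
    have happ := heq x1 y1
    rw [hnorm1, hsum1] at happ
    rw [← happ, hx1, hy1]
    have hfx : f (m (z/2 + (s:ℂ))) = Complex.exp (g (z/2 + (s:ℂ))) := (hge _).symm
    have hfy : f (m (z/2 - (s:ℂ))) = Complex.exp (g (z/2 - (s:ℂ))) := (hge _).symm
    rw [hfx, hfy, ← Complex.exp_add]
    congr 1
    have hoz : o z = (v 0 : ℂ) * o 1 + (v 1 : ℂ) * o I := by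
      have hsplit : z = ((v 0 : ℝ):ℂ) * 1 + ((v 1 : ℝ):ℂ) * I := by
        rw [hzdef]; ring
      rw [hsplit, hoadd, holin, holin]
    have hosum : o (z/2 + (s:ℂ)) + o (z/2 - (s:ℂ)) = o z := by
      rw [← hoadd, show z/2 + (s:ℂ) + (z/2 - (s:ℂ)) = z by ring]
    have hνsum : ((Complex.normSq (z/2 + (s:ℂ)) : ℝ):ℂ)
        + ((Complex.normSq (z/2 - (s:ℂ)) : ℝ):ℂ) = ((t:ℝ):ℂ) := by
      rw [← Complex.ofReal_add, hq2]
    have hsum : (∑ i, (![o 1 / 2, o I / 2]) i * ((v i : ℝ):ℂ))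
        = (v 0 : ℂ) * o 1 / 2 + (v 1 : ℂ) * o I / 2 := by
      rw [Fin.sum_univ_two]
      simp [Matrix.cons_val_zero, Matrix.cons_val_one]
      ring
    rw [hg_form (z/2 + (s:ℂ)), hg_form (z/2 - (s:ℂ)), hsum]
    rw [hoz] at hosum
    linear_combination (c 0/2) * hνsum + (1/2:ℂ) * hosum
end

section
/- Let f : ℝ² → ℂ be a continuous function satisfying the rectangular functional equation f(a)·f(c) = f(b)·f(d) whenever a, c and b, d are opposite vertices of a rectangle. If f vanishes at one point then f vanishes everywhere. -/
/-!
Identify `ℝ²` with `ℂ`, so that `H` is multiplication by `i`. Then the support `S` of `f` is open,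
and by the functional equation it is closed under the vertex map `P(a, b) = ω a + ω̄ b`, `ω = (1 + i)/2`.
Every `x + d` is the vertex `P(x + ω̄ d, x + ω d)`, where `|ω̄ d| = |ω d| = |d| / √2`. Hence a disc
around `x` inside `S` forces the disc of `√2` times the radius into `S`, and iterating, `S = ℝ²` as
soon as `S` is nonempty.
-/

open Set Function

/-- The vertex `(a + b)/2 + H((a - b)/2)` of the square with diagonal `ab`. -/
noncomputable def squareVertex (a b : ℝ × ℝ) : ℝ × ℝ :=
  ((a.1 + b.1) / 2 - (a.2 - b.2) / 2, (a.2 + b.2) / 2 + (a.1 - b.1) / 2)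

def sqNorm (p : ℝ × ℝ) : ℝ := p.1 ^ 2 + p.2 ^ 2

/-- The Euclidean disc of squared radius `R`; `dist` on `ℝ × ℝ` is the sup metric. -/
def sqDisc (x : ℝ × ℝ) (R : ℝ) : Set (ℝ × ℝ) := {y | sqNorm (y - x) < R}

lemma squareVertex_eq_of_rotation (H : ℝ × ℝ → ℝ × ℝ) (hH : ∀ p : ℝ × ℝ, H p = (-p.2, p.1))
    (a b : ℝ × ℝ) :
    (1/2 : ℝ) • (a + b) + H ((1/2 : ℝ) • (a - b)) = squareVertex a b := by
  rw [hH, squareVertex, Prod.ext_iff]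
  constructor
  · simp only [Prod.fst_add, Prod.smul_fst, Prod.fst_sub, Prod.smul_snd, Prod.snd_sub, smul_eq_mul]
    ring
  · simp only [Prod.snd_add, Prod.smul_snd, Prod.fst_sub, Prod.smul_fst, smul_eq_mul]
    ring

lemma squareVertex_add_add (x d : ℝ × ℝ) :
    squareVertex (x + ((d.1 + d.2) / 2, (d.2 - d.1) / 2)) (x + ((d.1 - d.2) / 2, (d.1 + d.2) / 2))
      = x + d := by
  simp only [squareVertex, Prod.ext_iff, Prod.fst_add, Prod.snd_add]
  constructor <;> ring

lemma mem_support_of_mul_eq {α M₀ : Type*} [MulZeroClass M₀] [NoZeroDivisors M₀] {f : α → M₀}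
    {a b c : α} {z : M₀} (heq : f a * f b = f c * z) (ha : a ∈ support f) (hb : b ∈ support f) :
    c ∈ support f := by
  intro h
  rw [h, zero_mul] at heq
  exact mul_ne_zero ha hb heq

section VertexClosed

variable {S : Set (ℝ × ℝ)} (hS : ∀ a ∈ S, ∀ b ∈ S, squareVertex a b ∈ S) {x : ℝ × ℝ}
include hS

lemma sqDisc_two_mul_subset {R : ℝ} (hR : sqDisc x R ⊆ S) : sqDisc x (2 * R) ⊆ S := by
  intro y (hy : sqNorm (y - x) < 2 * R)
  set d := y - x
  have hsq : sqNorm ((d.1 + d.2) / 2, (d.2 - d.1) / 2) = sqNorm d / 2 ∧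
      sqNorm ((d.1 - d.2) / 2, (d.1 + d.2) / 2) = sqNorm d / 2 := by
    constructor <;> (simp only [sqNorm]; ring)
  have hmem := hS _ (hR (show sqNorm _ < R by rw [add_sub_cancel_left, hsq.1]; linarith))
    _ (hR (show sqNorm _ < R by rw [add_sub_cancel_left, hsq.2]; linarith))
  rwa [squareVertex_add_add, add_sub_cancel] at hmem

lemma eq_univ_of_sqDisc_subset {R : ℝ} (hR₀ : 0 < R) (hR : sqDisc x R ⊆ S) : S = univ := by
  have hpow : ∀ n : ℕ, sqDisc x (2 ^ n * R) ⊆ S := by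
    intro n
    induction n with
    | zero => simpa using hR
    | succ n ih => simpa only [pow_succ', mul_assoc] using sqDisc_two_mul_subset hS ih
  refine eq_univ_of_forall fun y ↦ ?_
  obtain ⟨n, hn⟩ := pow_unbounded_of_one_lt (sqNorm (y - x) / R) one_lt_two
  exact hpow n (by rwa [div_lt_iff₀ hR₀] at hn)

lemma eq_univ_of_isOpen (hopen : IsOpen S) (hx : x ∈ S) : S = univ := by
  obtain ⟨ε, hε, hball⟩ := Metric.isOpen_iff.mp hopen x hx
  refine eq_univ_of_sqDisc_subset hS (x := x) (pow_pos hε 2) fun y hy ↦ hball ?_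
  simp only [sqDisc, sqNorm, mem_ofPred_eq, Prod.fst_sub, Prod.snd_sub] at hy
  have h₁ : (y.1 - x.1) ^ 2 < ε ^ 2 := by linarith [sq_nonneg (y.2 - x.2)]
  have h₂ : (y.2 - x.2) ^ 2 < ε ^ 2 := by linarith [sq_nonneg (y.1 - x.1)]
  rw [Metric.mem_ball, Prod.dist_eq, Real.dist_eq, Real.dist_eq, max_lt_iff]
  exact ⟨abs_lt_of_sq_lt_sq h₁ hε.le, abs_lt_of_sq_lt_sq h₂ hε.le⟩

end VertexClosed

theorem rectangular_equation_vanishing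
    (f : ℝ × ℝ → ℂ) (hf : Continuous f)
    (H : ℝ × ℝ → ℝ × ℝ) (hH : ∀ p : ℝ × ℝ, H p = (-p.2, p.1))
    (heq : ∀ x y : ℝ × ℝ,
      f x * f y = f ((1/2 : ℝ) • (x + y) + H ((1/2 : ℝ) • (x - y)))
                * f ((1/2 : ℝ) • (x + y) - H ((1/2 : ℝ) • (x - y))))
    (hvan : ∃ x₀ : ℝ × ℝ, f x₀ = 0) :
    ∀ x : ℝ × ℝ, f x = 0 := by
  obtain ⟨x₀, hx₀⟩ := hvan
  intro x
  by_contra hx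
  have hclosed : ∀ a ∈ support f, ∀ b ∈ support f, squareVertex a b ∈ support f := by
    intro a ha b hb
    have hab := heq a b
    rw [squareVertex_eq_of_rotation H hH] at hab
    exact mem_support_of_mul_eq hab ha hb
  have huniv := eq_univ_of_isOpen hclosed hf.isOpen_support (mem_support.mpr hx)
  exact eq_univ_iff_forall.mp huniv x₀ hx₀
end

section
/- Let n ≥ 1, let N = {(t,x) ∈ ℝ × ℝⁿ : t = |x|} be the future null cone and C = {(t,x) : t > |x|} the open future time-like cone. If F : N ∪ C → ℂ is continuous and satisfies F(U)·F(V) = F(U+V) for all U, V ∈ N, then F satisfies F(X)·F(Y) = F(X+Y) for all X, Y ∈ C. -/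
/-!
Normalise a time-like vector `X = (s, x)` to `(1, x / s)`, a point of the open unit ball at
height one. The line through the normalised points of `X` and `Y` meets the unit sphere in two
points `q`, `p` between which both normalised points lie, so `X` and `Y` are nonnegative
combinations of the same two null vectors `P = (1, p)` and `Q = (1, q)`. Multiplicativity on the
null cone, applied along the rays of `P` and `Q`, then gives
`F X * F Y = F (aP) F (bQ) F (a'P) F (b'Q) = F ((a + a')P) F ((b + b')Q) = F (X + Y)`.
-/

open Set

variable {E : Type*} [NormedAddCommGroup E]

variable (E) in
def futureNullCone : Set (ℝ × E) := {U | U.1 = ‖U.2‖}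

theorem one_prod_mem_futureNullCone {p : E} (hp : ‖p‖ = 1) :
    ((1 : ℝ), p) ∈ futureNullCone E :=
  hp.symm

variable [NormedSpace ℝ E]

theorem smul_mem_futureNullCone {a : ℝ} (ha : 0 ≤ a) {U : ℝ × E}
    (hU : U ∈ futureNullCone E) : a • U ∈ futureNullCone E := by
  simp_all [futureNullCone, norm_smul, abs_of_nonneg ha]

theorem exists_nonneg_norm_add_smul_eq_one {w d : E} (hw : ‖w‖ < 1) (hd : ‖d‖ = 1) :
    ∃ r : ℝ, 0 ≤ r ∧ ‖w + r • d‖ = 1 := by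
  have hcont : ContinuousOn (fun r : ℝ => ‖w + r • d‖) (Icc 0 2) := by fun_prop
  have hfar : 1 ≤ ‖w + (2 : ℝ) • d‖ := by
    have := norm_sub_norm_le ((2 : ℝ) • d) (-w)
    rw [norm_smul, hd, norm_neg, sub_neg_eq_add, add_comm] at this
    norm_num at this
    linarith
  obtain ⟨r, hr, hr1⟩ := intermediate_value_Icc zero_le_two hcont ⟨by simpa using hw.le, hfar⟩
  exact ⟨r, hr.1, hr1⟩

theorem exists_norm_eq_one_and_eq_norm_smul [Nontrivial E] (w : E) :
    ∃ d : E, ‖d‖ = 1 ∧ w = ‖w‖ • d := by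
  rcases eq_or_ne w 0 with rfl | hw
  · obtain ⟨d, hd⟩ := exists_norm_eq E zero_le_one
    exact ⟨d, hd, by simp⟩
  · exact ⟨‖w‖⁻¹ • w, by simp [norm_smul, hw], by simp [smul_smul, hw]⟩

theorem exists_chord_mem_segment [Nontrivial E] {u v : E} (hu : ‖u‖ < 1) (hv : ‖v‖ < 1) :
    ∃ p q : E, ‖p‖ = 1 ∧ ‖q‖ = 1 ∧ u ∈ segment ℝ q p ∧ v ∈ segment ℝ q p := by
  obtain ⟨d, hd, hvu⟩ := exists_norm_eq_one_and_eq_norm_smul (v - u)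
  set m := ‖v - u‖
  have hm : 0 ≤ m := norm_nonneg _
  obtain ⟨r, hr, hp⟩ := exists_nonneg_norm_add_smul_eq_one hv hd
  obtain ⟨r', hr', hq⟩ := exists_nonneg_norm_add_smul_eq_one hu (d := -d) (by simpa)
  -- On the line `t ↦ u + t • d`, the points `q, u, v, p` sit at `t = -r', 0, m, m + r`.
  let L : ℝ →ᵃ[ℝ] E := AffineMap.lineMap u (u + d)
  have hL (t : ℝ) : L t = u + t • d := by simp [L, AffineMap.lineMap_apply, add_comm]
  have hseg : segment ℝ (u + r' • -d) (v + r • d) = L '' Icc (-r') (m + r) := by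
    rw [← segment_eq_Icc (by linarith), image_segment, hL, hL]
    congr 1
    · rw [neg_smul, smul_neg]
    · rw [add_smul, ← add_assoc, ← hvu, add_sub_cancel]
  refine ⟨v + r • d, u + r' • -d, hp, hq, ?_, ?_⟩
  · rw [hseg]
    exact ⟨0, ⟨by linarith, by linarith⟩, by simp [hL]⟩
  · rw [hseg]
    exact ⟨m, ⟨by linarith, by linarith⟩, by rw [hL, ← hvu, add_sub_cancel]⟩

theorem exists_eq_smul_add_smul_of_inv_smul_mem_segment {X : ℝ × E} (hX : 0 < X.1) {p q : E}
    (hseg : X.1⁻¹ • X.2 ∈ segment ℝ q p) :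
    ∃ a b : ℝ, 0 ≤ a ∧ 0 ≤ b ∧ X = a • ((1 : ℝ), p) + b • ((1 : ℝ), q) := by
  obtain ⟨α, β, hα, hβ, hαβ, hx⟩ := hseg
  refine ⟨X.1 * β, X.1 * α, by positivity, by positivity, Prod.ext ?_ ?_⟩
  · simp only [Prod.fst_add, Prod.smul_fst, smul_eq_mul, mul_one]
    linear_combination (-X.1) * hαβ
  · simp only [Prod.snd_add, Prod.smul_snd, mul_smul, ← smul_add, add_comm (β • p), hx,
      smul_inv_smul₀ hX.ne']

theorem exists_futureNullCone_pair [Nontrivial E] {X Y : ℝ × E} (hX : ‖X.2‖ < X.1)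
    (hY : ‖Y.2‖ < Y.1) :
    ∃ P ∈ futureNullCone E, ∃ Q ∈ futureNullCone E, ∃ a b a' b' : ℝ,
      0 ≤ a ∧ 0 ≤ b ∧ 0 ≤ a' ∧ 0 ≤ b' ∧ X = a • P + b • Q ∧ Y = a' • P + b' • Q := by
  have hX0 : 0 < X.1 := (norm_nonneg _).trans_lt hX
  have hY0 : 0 < Y.1 := (norm_nonneg _).trans_lt hY
  have hball {Z : ℝ × E} (hZ : ‖Z.2‖ < Z.1) (hZ0 : 0 < Z.1) : ‖Z.1⁻¹ • Z.2‖ < 1 := by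
    rwa [norm_smul, norm_inv, Real.norm_of_nonneg hZ0.le, inv_mul_lt_one₀ hZ0]
  obtain ⟨p, q, hp, hq, hu, hv⟩ := exists_chord_mem_segment (hball hX hX0) (hball hY hY0)
  obtain ⟨a, b, ha, hb, rfl⟩ := exists_eq_smul_add_smul_of_inv_smul_mem_segment hX0 hu
  obtain ⟨a', b', ha', hb', rfl⟩ := exists_eq_smul_add_smul_of_inv_smul_mem_segment hY0 hv
  exact ⟨_, one_prod_mem_futureNullCone hp, _, one_prod_mem_futureNullCone hq,
    a, b, a', b', ha, hb, ha', hb', rfl, rfl⟩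

theorem mul_eq_map_add_of_nonneg_combinations {M R : Type*} [AddCommMonoid M] [Module ℝ M]
    [CommSemigroup R] {N : Set M} (hN : ∀ a : ℝ, 0 ≤ a → ∀ U ∈ N, a • U ∈ N) {F : M → R}
    (hF : ∀ U ∈ N, ∀ V ∈ N, F U * F V = F (U + V)) {P Q : M} (hP : P ∈ N) (hQ : Q ∈ N)
    {a b a' b' : ℝ} (ha : 0 ≤ a) (hb : 0 ≤ b) (ha' : 0 ≤ a') (hb' : 0 ≤ b') :
    F (a • P + b • Q) * F (a' • P + b' • Q) = F (a • P + b • Q + (a' • P + b' • Q)) := by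
  have hsplit {α β : ℝ} (hα : 0 ≤ α) (hβ : 0 ≤ β) :
      F (α • P + β • Q) = F (α • P) * F (β • Q) :=
    (hF _ (hN α hα P hP) _ (hN β hβ Q hQ)).symm
  have hray {W : M} (hW : W ∈ N) {α β : ℝ} (hα : 0 ≤ α) (hβ : 0 ≤ β) :
      F (α • W) * F (β • W) = F ((α + β) • W) := by
    rw [hF _ (hN α hα W hW) _ (hN β hβ W hW), add_smul]
  have hsum : a • P + b • Q + (a' • P + b' • Q) = (a + a') • P + (b + b') • Q := by
    rw [add_smul, add_smul]; abel
  rw [hsum, hsplit ha hb, hsplit ha' hb', hsplit (add_nonneg ha ha') (add_nonneg hb hb'),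
    ← hray hP ha ha', ← hray hQ hb hb', mul_mul_mul_comm]

theorem null_cone_cauchy_extension_general (n : ℕ) (hn : 1 ≤ n)
    (F : ℝ × EuclideanSpace ℝ (Fin n) → ℂ)
    (heq : ∀ U V : ℝ × EuclideanSpace ℝ (Fin n),
      U.1 = ‖U.2‖ → V.1 = ‖V.2‖ → F U * F V = F (U + V)) :
    ∀ X Y : ℝ × EuclideanSpace ℝ (Fin n),
      ‖X.2‖ < X.1 → ‖Y.2‖ < Y.1 → F X * F Y = F (X + Y) := by
  have : Nonempty (Fin n) := ⟨⟨0, hn⟩⟩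
  intro X Y hX hY
  obtain ⟨P, hP, Q, hQ, a, b, a', b', ha, hb, ha', hb', rfl, rfl⟩ :=
    exists_futureNullCone_pair hX hY
  exact mul_eq_map_add_of_nonneg_combinations
    (fun _ ha _ hU => smul_mem_futureNullCone ha hU) (fun U hU V hV => heq U V hU hV)
    hP hQ ha hb ha' hb'

theorem null_cone_cauchy_extension (n : ℕ) (hn : 1 ≤ n)
    (F : ℝ × EuclideanSpace ℝ (Fin n) → ℂ)
    (hF : ContinuousOn F {p : ℝ × EuclideanSpace ℝ (Fin n) | ‖p.2‖ ≤ p.1})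
    (heq : ∀ U V : ℝ × EuclideanSpace ℝ (Fin n),
      U.1 = ‖U.2‖ → V.1 = ‖V.2‖ → F U * F V = F (U + V)) :
    ∀ X Y : ℝ × EuclideanSpace ℝ (Fin n),
      ‖X.2‖ < X.1 → ‖Y.2‖ < Y.1 → F X * F Y = F (X + Y) :=
  null_cone_cauchy_extension_general n hn F heq
end

section
/- Let f : ℝ² → ℂ and F be continuous functions satisfying f(x)·f(y)·f(z) = F(|x| + |y| + |z|, x + y + z) for all x, y, z ∈ ℝ². If f vanishes at one point then f vanishes everywhere. -/
/-!
Taking `x = y = z` and `(x, y, z) = (3x, 0, 0)` in the equation gives the same argument of `F`,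
hence `f x ^ 3 = f (3x) * f 0 ^ 2`. So the zero set of `f` is stable under `x ↦ x / 3`; being
closed, it then contains `0`, and once `f 0 = 0` the identity forces `f x ^ 3 = 0` everywhere.
-/

open Filter Topology

theorem apply_zero_eq_zero_of_zeros_smul_stable {𝕜 E M : Type*} [NormedField 𝕜] [AddCommGroup E]
    [TopologicalSpace E] [Module 𝕜 E] [ContinuousSMul 𝕜 E] [Zero M] [TopologicalSpace M]
    [T1Space M] {f : E → M} (hf : Continuous f) {r : 𝕜} (hr : ‖r‖ < 1)
    (hzero : ∀ x, f x = 0 → f (r • x) = 0) {x₀ : E} (hx₀ : f x₀ = 0) : f 0 = 0 := by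
  have hseq : ∀ n : ℕ, f (r ^ n • x₀) = 0 := by
    intro n
    induction n with
    | zero => simpa using hx₀
    | succ n ih => simpa [pow_succ', mul_smul] using hzero _ ih
  have htend : Tendsto (fun n : ℕ => r ^ n • x₀) atTop (𝓝 0) := by
    simpa using (tendsto_pow_atTop_nhds_zero_of_norm_lt_one hr).smul_const x₀
  exact (isClosed_singleton.preimage hf).mem_of_tendsto htend (Eventually.of_forall hseq)

theorem pow_three_eq_map_three_smul_mul_sq {E M : Type*} [NormedAddCommGroup E]
    [NormedSpace ℝ E] [CommMonoid M] {f : E → M} {F : ℝ × E → M}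
    (heq : ∀ x y z : E, f x * f y * f z = F (‖x‖ + ‖y‖ + ‖z‖, x + y + z)) (x : E) :
    f x ^ 3 = f ((3 : ℝ) • x) * f 0 ^ 2 := by
  have hnorm : ‖x‖ + ‖x‖ + ‖x‖ = ‖(3 : ℝ) • x‖ + ‖(0 : E)‖ + ‖(0 : E)‖ := by
    rw [norm_smul, norm_zero, Real.norm_ofNat]
    ring
  have hsum : x + x + x = (3 : ℝ) • x + 0 + 0 := by
    rw [add_zero, add_zero, show (3 : ℝ) = 1 + 1 + 1 by norm_num, add_smul, add_smul, one_smul]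
  calc f x ^ 3 = f x * f x * f x := by rw [pow_three, mul_assoc]
    _ = f ((3 : ℝ) • x) * f 0 * f 0 := by rw [heq, heq, hnorm, hsum]
    _ = f ((3 : ℝ) • x) * f 0 ^ 2 := by rw [sq, mul_assoc]

theorem wave_cubic_equation_vanishing_general
    (f : EuclideanSpace ℝ (Fin 2) → ℂ)
    (F : ℝ × EuclideanSpace ℝ (Fin 2) → ℂ)
    (hf : Continuous f)
    (heq : ∀ x y z : EuclideanSpace ℝ (Fin 2),
      f x * f y * f z = F (‖x‖ + ‖y‖ + ‖z‖, x + y + z))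
    (hvan : ∃ x₀, f x₀ = 0) :
    ∀ x, f x = 0 := by
  have key := pow_three_eq_map_three_smul_mul_sq heq
  obtain ⟨x₀, hx₀⟩ := hvan
  have hthird : ∀ x, f x = 0 → f ((3 : ℝ)⁻¹ • x) = 0 := by
    intro x hx
    have := key ((3 : ℝ)⁻¹ • x)
    rw [smul_inv_smul₀ three_ne_zero, hx, zero_mul] at this
    exact pow_eq_zero_iff three_ne_zero |>.mp this
  have hf0 : f 0 = 0 :=
    apply_zero_eq_zero_of_zeros_smul_stable hf (by norm_num) hthird hx₀
  intro x
  have := key x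
  rw [hf0, zero_pow two_ne_zero, mul_zero] at this
  exact pow_eq_zero_iff three_ne_zero |>.mp this

theorem wave_cubic_equation_vanishing
    (f : EuclideanSpace ℝ (Fin 2) → ℂ)
    (F : ℝ × EuclideanSpace ℝ (Fin 2) → ℂ)
    (hf : Continuous f)
    (hF : ContinuousOn F {p : ℝ × EuclideanSpace ℝ (Fin 2) | ‖p.2‖ ≤ p.1})
    (heq : ∀ x y z : EuclideanSpace ℝ (Fin 2),
      f x * f y * f z = F (‖x‖ + ‖y‖ + ‖z‖, x + y + z))
    (hvan : ∃ x₀, f x₀ = 0) :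
    ∀ x, f x = 0 :=
  wave_cubic_equation_vanishing_general f F hf heq hvan
end

section
/- Let f : ℝ² → ℂ and F be continuous never-vanishing functions satisfying f(x)·f(y)·f(z) = F(|x| + |y| + |z|, x + y + z) for all x, y, z ∈ ℝ². Then there exist constants A ∈ ℂ, b ∈ ℂ², C ∈ ℂ such that f(x) = exp(A·|x| + b·x + C) for all x, and F(t,v) = exp(A·t + b·v + 3C) for all (t,v) with t > |v|. -/
open intervalIntegral MeasureTheory

theorem hom_exp' (φ : ℝ → ℂ) (hc : Continuous φ) (h0 : φ 0 = 1)
    (hmul : ∀ s t, φ (s + t) = φ s * φ t) :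
    ∃ c : ℂ, ∀ t, φ t = Complex.exp (c * t) := by
  obtain ⟨δ, hδpos, hδ⟩ : ∃ δ > 0, ∀ t ∈ Set.uIoc (0:ℝ) δ, ‖φ t - 1‖ ≤ 1/2 := by
    have : ContinuousAt φ 0 := hc.continuousAt
    rw [Metric.continuousAt_iff] at this
    obtain ⟨ε, hε, hball⟩ := this (1/2) (by norm_num)
    refine ⟨ε/2, by linarith, fun t ht => ?_⟩
    have h1 : t ∈ Set.Ioc 0 (ε/2) := by
      rcases Set.mem_uIoc.1 ht with h | h
      · exact h
      · exfalso; rcases h with ⟨h1, h2⟩; linarith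
    have : dist t 0 < ε := by
      rw [Real.dist_eq, sub_zero, abs_of_pos h1.1]; linarith [h1.2]
    have := hball this
    rw [dist_eq_norm, h0] at this
    linarith
  set c : ℂ := ∫ t in (0:ℝ)..δ, φ t with hcdef
  have hint : ∀ a b : ℝ, IntervalIntegrable φ volume a b := fun a b =>
    hc.intervalIntegrable a b
  have hcne : c ≠ 0 := by
    intro h
    have hb : ‖(∫ t in (0:ℝ)..δ, φ t) - ∫ t in (0:ℝ)..δ, (1:ℂ)‖ ≤ (1/2) * |δ - 0| := by
      rw [← intervalIntegral.integral_sub (hint 0 δ) intervalIntegrable_const]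
      exact intervalIntegral.norm_integral_le_of_norm_le_const hδ
    rw [← hcdef, h, intervalIntegral.integral_const, zero_sub, norm_neg, sub_zero,
      abs_of_pos hδpos] at hb
    have hb2 : ‖(δ : ℝ) • (1:ℂ)‖ = δ := by
      rw [norm_smul, norm_one, mul_one, Real.norm_eq_abs, abs_of_pos hδpos]
    rw [hb2] at hb
    linarith
  set Φ : ℝ → ℂ := fun u => ∫ t in (0:ℝ)..u, φ t with hΦdef
  have hΦd : ∀ s, HasDerivAt Φ (φ s) s := fun s =>
    intervalIntegral.integral_hasDerivAt_right (hint 0 s)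
      hc.stronglyMeasurable.stronglyMeasurableAtFilter hc.continuousAt
  have key : ∀ s, φ s = (Φ (s + δ) - Φ s) * c⁻¹ := by
    intro s
    have h1 : ∫ t in (0:ℝ)..δ, φ (s + t) = φ s * c := by
      rw [hcdef, ← intervalIntegral.integral_const_mul]
      congr 1; ext t; exact hmul s t
    have h2 : (∫ t in (0:ℝ)..δ, φ (s + t)) = Φ (s + δ) - Φ s := by
      rw [intervalIntegral.integral_comp_add_left φ s, add_zero]
      exact (intervalIntegral.integral_interval_sub_left (hint 0 (s+δ)) (hint 0 s)).symm
    rw [h2] at h1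
    rw [h1, mul_assoc, mul_inv_cancel₀ hcne, mul_one]
  set a : ℂ := (φ δ - 1) * c⁻¹ with hadef
  have hφd : ∀ s, HasDerivAt φ (a * φ s) s := by
    intro s
    have hΦ1 : HasDerivAt (fun u : ℝ => Φ (u + δ)) (φ (s + δ)) s :=
      HasDerivAt.comp_add_const s δ (hΦd (s + δ))
    have hd : HasDerivAt (fun u => (Φ (u + δ) - Φ u) * c⁻¹)
        ((φ (s + δ) - φ s) * c⁻¹) s := (hΦ1.sub (hΦd s)).mul_const c⁻¹
    have hval : (φ (s + δ) - φ s) * c⁻¹ = a * φ s := by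
      rw [hmul s δ, hadef]; ring
    have heqfun : (fun u => (Φ (u + δ) - Φ u) * c⁻¹) = φ := (funext key).symm
    rw [heqfun, hval] at hd
    exact hd
  refine ⟨a, fun t => ?_⟩
  set ψ : ℝ → ℂ := fun s => φ s * Complex.exp (-(a * s)) with hψdef
  have hψd : ∀ s, HasDerivAt ψ 0 s := by
    intro s
    have he : HasDerivAt (fun s : ℝ => Complex.exp (-(a * s)))
        (Complex.exp (-(a * s)) * (-a)) s := by
      have hid : HasDerivAt (fun s : ℝ => (s : ℂ)) 1 s := Complex.ofRealCLM.hasDerivAt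
      have := ((hid.const_mul a).neg).cexp
      simpa using this
    have := (hφd s).mul he
    rw [show (0:ℂ) = a * φ s * Complex.exp (-(a * s)) + φ s * (Complex.exp (-(a * s)) * -a) by ring]
    exact this
  have hconst : ∀ s, ψ s = ψ 0 := by
    have hdiff : Differentiable ℝ ψ := fun s => (hψd s).differentiableAt
    have hder : ∀ s, deriv ψ s = 0 := fun s => (hψd s).deriv
    intro s
    exact is_const_of_deriv_eq_zero hdiff hder s 0
  have h1 : φ t * Complex.exp (-(a * t)) = 1 := by
    have := hconst t
    simp only [hψdef] at this
    simpa [h0] using this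
  calc φ t = (φ t * Complex.exp (-(a * ↑t))) * Complex.exp (a * t) := by
        rw [mul_assoc, ← Complex.exp_add]; simp
    _ = Complex.exp (a * t) := by rw [h1, one_mul]

theorem hom_exp_nonneg (φ : ℝ → ℂ) (hc : Continuous φ) (h0 : φ 0 = 1)
    (hne : ∀ t, φ t ≠ 0)
    (hmul : ∀ s t, 0 ≤ s → 0 ≤ t → φ (s + t) = φ s * φ t) :
    ∃ c : ℂ, ∀ t, 0 ≤ t → φ t = Complex.exp (c * t) := by
  set Φ : ℝ → ℂ := fun t => φ (max t 0) * (φ (max (-t) 0))⁻¹ with hΦdef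
  have hrep : ∀ (u a b : ℝ), 0 ≤ a → 0 ≤ b → a - b = u → Φ u = φ a * (φ b)⁻¹ := by
    intro u a b ha hb hab
    have h1 : max u 0 + b = max (-u) 0 + a := by
      rcases le_total u 0 with h | h
      · rw [max_eq_right h, max_eq_left (by linarith)]; linarith
      · rw [max_eq_left h, max_eq_right (by linarith)]; linarith
    have h2 : φ (max u 0) * φ b = φ (max (-u) 0) * φ a := by
      rw [← hmul _ _ (le_max_right u 0) hb, ← hmul _ _ (le_max_right (-u) 0) ha, h1]
    rw [hΦdef]
    field_simp [hne (u ⊔ 0), hne (-u ⊔ 0), hne b]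
    linear_combination h2
  have hΦc : Continuous Φ := by
    apply Continuous.mul
    · exact hc.comp (continuous_id.max continuous_const)
    · exact (hc.comp (continuous_neg.max continuous_const)).inv₀ fun t => hne _
  have hΦ0 : Φ 0 = 1 := by
    rw [hrep 0 0 0 le_rfl le_rfl (by ring), h0]; simp
  have hΦmul : ∀ s t, Φ (s + t) = Φ s * Φ t := by
    intro s t
    rw [hrep (s + t) (max s 0 + max t 0) (max (-s) 0 + max (-t) 0)
      (by positivity) (by positivity) (by rcases le_total s 0 with h|h <;> rcases le_total t 0 with h'|h' <;>
        simp [max_eq_left, max_eq_right, *] <;> linarith)]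
    rw [hΦdef]
    rw [hmul _ _ (le_max_right s 0) (le_max_right t 0),
      hmul _ _ (le_max_right (-s) 0) (le_max_right (-t) 0)]
    field_simp [hne]
  obtain ⟨c, hcc⟩ := hom_exp' Φ hΦc hΦ0 hΦmul
  refine ⟨c, fun t ht => ?_⟩
  have := hrep t t 0 ht le_rfl (by ring)
  rw [h0] at this
  simp at this
  rw [← this, hcc]

theorem wave_cubic_equation_solution
    (f : EuclideanSpace ℝ (Fin 2) → ℂ)
    (F : ℝ × EuclideanSpace ℝ (Fin 2) → ℂ)
    (hf : Continuous f)
    (hF : ContinuousOn F {p : ℝ × EuclideanSpace ℝ (Fin 2) | ‖p.2‖ ≤ p.1})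
    (hfne : ∀ x, f x ≠ 0)
    (hFne : ∀ p : ℝ × EuclideanSpace ℝ (Fin 2), ‖p.2‖ ≤ p.1 → F p ≠ 0)
    (heq : ∀ x y z : EuclideanSpace ℝ (Fin 2),
      f x * f y * f z = F (‖x‖ + ‖y‖ + ‖z‖, x + y + z)) :
    ∃ (A C : ℂ) (b : Fin 2 → ℂ),
      (∀ x : EuclideanSpace ℝ (Fin 2),
        f x = Complex.exp (A * ‖x‖ + (∑ i, b i * (x i)) + C)) ∧
      (∀ (t : ℝ) (v : EuclideanSpace ℝ (Fin 2)), ‖v‖ < t →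
        F (t, v) = Complex.exp (A * t + (∑ i, b i * (v i)) + 3 * C)) := by
  have hf0 : f 0 ≠ 0 := hfne 0
  -- basic facts about EuclideanSpace.single
  have hnorm : ∀ (i : Fin 2) (r : ℝ),
      ‖(EuclideanSpace.single i r : EuclideanSpace ℝ (Fin 2))‖ = |r| := fun i r =>
    (EuclideanSpace.norm_single i r).trans (Real.norm_eq_abs r)
  have hadd : ∀ (i : Fin 2) (a b : ℝ),
      (EuclideanSpace.single i (a + b) : EuclideanSpace ℝ (Fin 2)) =
        EuclideanSpace.single i a + EuclideanSpace.single i b := by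
    intro i a b
    ext j
    simp only [EuclideanSpace.single_apply, PiLp.add_apply]
    split <;> simp
  have hzero : ∀ i : Fin 2,
      (EuclideanSpace.single i (0:ℝ) : EuclideanSpace ℝ (Fin 2)) = 0 := by
    intro i; ext j; simp [EuclideanSpace.single_apply]
  have hneg : ∀ (i : Fin 2) (a : ℝ),
      (EuclideanSpace.single i (-a) : EuclideanSpace ℝ (Fin 2)) =
        -EuclideanSpace.single i a := by
    intro i a; ext j; simp [EuclideanSpace.single_apply]; split <;> simp
  have hconts : ∀ i : Fin 2,
      Continuous (fun r : ℝ => (EuclideanSpace.single i r : EuclideanSpace ℝ (Fin 2))) := by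
    intro i
    have : (fun r : ℝ => (EuclideanSpace.single i r : EuclideanSpace ℝ (Fin 2))) =
        fun r : ℝ => r • (EuclideanSpace.single i (1:ℝ) : EuclideanSpace ℝ (Fin 2)) := by
      funext r; ext j; simp [EuclideanSpace.single_apply]
    rw [this]
    exact continuous_id.smul continuous_const
  -- invariance principle
  have inv : ∀ x y z x' y' z' : EuclideanSpace ℝ (Fin 2),
      ‖x‖ + ‖y‖ + ‖z‖ = ‖x'‖ + ‖y'‖ + ‖z'‖ → x + y + z = x' + y' + z' →
      f x * f y * f z = f x' * f y' * f z' := by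
    intro x y z x' y' z' hn hs
    rw [heq x y z, heq x' y' z', hn, hs]
  set w : ℝ → EuclideanSpace ℝ (Fin 2) := fun r => EuclideanSpace.single 0 r with hwdef
  -- radial multiplicativity
  have Kpos : ∀ r s : ℝ, 0 ≤ r → 0 ≤ s →
      f (w r) * f (w s) = f (w (r + s)) * f 0 := by
    intro r s hr hs
    have h := inv (w r) (w s) 0 (w (r + s)) 0 0
      (by
        simp only [hwdef]
        rw [hnorm, hnorm, hnorm, norm_zero, abs_of_nonneg hr, abs_of_nonneg hs,
          abs_of_nonneg (add_nonneg hr hs)]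
        ring)
      (by simp only [hwdef]; rw [hadd 0 r s]; abel)
    exact mul_right_cancel₀ hf0 h
  have Kneg : ∀ r s : ℝ, 0 ≤ r → 0 ≤ s →
      f (w (-r)) * f (w (-s)) = f (w (-(r + s))) * f 0 := by
    intro r s hr hs
    have h := inv (w (-r)) (w (-s)) 0 (w (-(r + s))) 0 0
      (by
        simp only [hwdef]
        rw [hnorm, hnorm, hnorm, norm_zero, abs_neg, abs_neg, abs_neg,
          abs_of_nonneg hr, abs_of_nonneg hs, abs_of_nonneg (add_nonneg hr hs)]
        ring)
      (by
        simp only [hwdef]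
        rw [show (-(r+s)) = (-r) + (-s) by ring, hadd 0 (-r) (-s)]
        abel)
    exact mul_right_cancel₀ hf0 h
  -- the radial hom
  set ψ : ℝ → ℂ := fun r => f (w r) * f (w (-r)) with hψdef
  have hψmul : ∀ r s : ℝ, 0 ≤ r → 0 ≤ s → ψ r * ψ s = ψ (r + s) * (f 0)^2 := by
    intro r s hr hs
    have e1 := Kpos r s hr hs
    have e2 := Kneg r s hr hs
    simp only [hψdef]
    linear_combination (f (w (-r)) * f (w (-s))) * e1 + (f (w (r+s)) * f 0) * e2
  set φr : ℝ → ℂ := fun r => ψ r * ((f 0)^2)⁻¹ with hφrdef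
  have hf02 : (f 0)^2 ≠ 0 := pow_ne_zero 2 hf0
  have hw0 : w (0:ℝ) = 0 := by simp only [hwdef]; exact hzero 0
  have hφr0 : φr 0 = 1 := by
    simp only [hφrdef, hψdef, neg_zero, hw0]
    field_simp
  have hφrc : Continuous φr := by
    apply Continuous.mul _ continuous_const
    exact (hf.comp (hconts 0)).mul (hf.comp ((hconts 0).comp continuous_neg))
  have hφrne : ∀ t, φr t ≠ 0 := fun t =>
    mul_ne_zero (mul_ne_zero (hfne _) (hfne _)) (inv_ne_zero hf02)
  have hφrmul : ∀ r s : ℝ, 0 ≤ r → 0 ≤ s → φr (r + s) = φr r * φr s := by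
    intro r s hr hs
    have hmm := hψmul r s hr hs
    calc φr (r + s) = ψ (r + s) * ((f 0)^2)⁻¹ := rfl
      _ = (ψ (r + s) * (f 0)^2) * ((f 0)^2)⁻¹ * ((f 0)^2)⁻¹ := by
          field_simp
      _ = (ψ r * ψ s) * ((f 0)^2)⁻¹ * ((f 0)^2)⁻¹ := by rw [← hmm]
      _ = φr r * φr s := by simp only [hφrdef]; ring
  obtain ⟨c, hc⟩ := hom_exp_nonneg φr hφrc hφr0 hφrne fun s t hs ht => hφrmul s t hs ht
  have hψval : ∀ r : ℝ, 0 ≤ r → ψ r = (f 0)^2 * Complex.exp (c * r) := by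
    intro r hr
    have h5 := hc r hr
    simp only [hφrdef] at h5
    calc ψ r = ψ r * ((f 0)^2)⁻¹ * (f 0)^2 := by field_simp
      _ = Complex.exp (c * r) * (f 0)^2 := by rw [h5]
      _ = (f 0)^2 * Complex.exp (c * r) := by ring
  -- R2 : product over antipodes depends only on norm
  have R2 : ∀ x : EuclideanSpace ℝ (Fin 2),
      f x * f (-x) = (f 0)^2 * Complex.exp (c * ‖x‖) := by
    intro x
    have h := inv x (-x) 0 (w ‖x‖) (w (-‖x‖)) 0
      (by
        simp only [hwdef]
        rw [hnorm, hnorm, norm_zero, norm_neg, abs_neg,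
          abs_of_nonneg (norm_nonneg x)]
        try ring)
      (by
        simp only [hwdef]
        rw [← hadd 0 ‖x‖ (-‖x‖)]
        simp [hzero 0])
    have h2 : f x * f (-x) = f (w ‖x‖) * f (w (-‖x‖)) :=
      mul_right_cancel₀ hf0 h
    rw [h2]
    have := hψval ‖x‖ (norm_nonneg x)
    simp only [hψdef] at this
    rw [this]
  -- R3 : the key product rule
  have R3 : ∀ x y : EuclideanSpace ℝ (Fin 2),
      f x * f y = f (x + y) * f 0 *
        Complex.exp (c/2 * ‖x‖ + c/2 * ‖y‖ - c/2 * ‖x + y‖) := by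
    intro x y
    set r : ℝ := (‖x‖ + ‖y‖ - ‖x + y‖)/2 with hrdef
    have hr : 0 ≤ r := by
      have := norm_add_le x y
      rw [hrdef]; linarith
    have h := inv x y 0 (x + y) (w r) (w (-r))
      (by
        simp only [hwdef]
        rw [hnorm, hnorm, norm_zero, abs_neg, abs_of_nonneg hr, hrdef]
        ring)
      (by
        have hsum : w r + w (-r) = 0 := by
          simp only [hwdef]
          rw [← hadd 0 r (-r)]
          simp [hzero 0]
        rw [add_zero, add_assoc, hsum, add_zero])
    have hwneg : w (-r) = -(w r) := by simp only [hwdef]; exact hneg 0 r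
    rw [hwneg] at h
    have h2 := R2 (w r)
    have hwr : ‖w r‖ = r := by simp only [hwdef]; rw [hnorm 0 r]; exact abs_of_nonneg hr
    rw [hwr] at h2
    have hexpeq : Complex.exp (c * r) =
        Complex.exp (c/2 * ‖x‖ + c/2 * ‖y‖ - c/2 * ‖x + y‖) := by
      congr 1
      rw [hrdef]
      push_cast
      ring
    rw [hexpeq] at h2
    have h3 : f x * f y * f 0 = f (x + y) * ((f 0)^2 *
        Complex.exp (c/2 * ‖x‖ + c/2 * ‖y‖ - c/2 * ‖x + y‖)) := by
      rw [← h2]; linear_combination h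
    apply mul_right_cancel₀ hf0
    rw [h3]; ring
  set A : ℂ := c/2 with hAdef
  -- the group hom h
  set g : EuclideanSpace ℝ (Fin 2) → ℂ :=
    fun x => f x * Complex.exp (-(A * ‖x‖)) * (f 0)⁻¹ with hgdef
  have hgmul : ∀ x y, g x * g y = g (x + y) := by
    intro x y
    have e := R3 x y
    have e2 : Complex.exp (-(A * ‖x‖)) * Complex.exp (-(A * ‖y‖)) *
        Complex.exp (A * ‖x‖ + A * ‖y‖ - A * ‖x + y‖) =
        Complex.exp (-(A * ‖x + y‖)) := by
      rw [← Complex.exp_add, ← Complex.exp_add]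
      congr 1; ring
    have hid : f 0 * (f 0)⁻¹ = 1 := mul_inv_cancel₀ hf0
    show (f x * Complex.exp (-(A * ‖x‖)) * (f 0)⁻¹) *
        (f y * Complex.exp (-(A * ‖y‖)) * (f 0)⁻¹) =
        f (x + y) * Complex.exp (-(A * ‖x + y‖)) * (f 0)⁻¹
    calc (f x * Complex.exp (-(A * ‖x‖)) * (f 0)⁻¹) *
          (f y * Complex.exp (-(A * ‖y‖)) * (f 0)⁻¹)
        = (f x * f y) * (Complex.exp (-(A * ‖x‖)) * Complex.exp (-(A * ‖y‖))) *
            ((f 0)⁻¹ * (f 0)⁻¹) := by ring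
      _ = (f (x + y) * f 0 * Complex.exp (A * ‖x‖ + A * ‖y‖ - A * ‖x + y‖)) *
            (Complex.exp (-(A * ‖x‖)) * Complex.exp (-(A * ‖y‖))) *
            ((f 0)⁻¹ * (f 0)⁻¹) := by rw [e]
      _ = f (x + y) * (Complex.exp (-(A * ‖x‖)) * Complex.exp (-(A * ‖y‖)) *
            Complex.exp (A * ‖x‖ + A * ‖y‖ - A * ‖x + y‖)) *
            (f 0 * (f 0)⁻¹) * (f 0)⁻¹ := by ring
      _ = f (x + y) * Complex.exp (-(A * ‖x + y‖)) * (f 0)⁻¹ := by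
            rw [e2, hid]; ring
  have hg0 : g 0 = 1 := by
    show f 0 * Complex.exp (-(A * ‖(0 : EuclideanSpace ℝ (Fin 2))‖)) * (f 0)⁻¹ = 1
    rw [norm_zero]
    simp [mul_inv_cancel₀ hf0]
  have hgc : Continuous g := by
    apply Continuous.mul _ continuous_const
    exact hf.mul (Complex.continuous_exp.comp
      ((continuous_const.mul (Complex.continuous_ofReal.comp continuous_norm)).neg))
  have hsingle_g : ∀ i : Fin 2, ∃ bi : ℂ,
      ∀ t : ℝ, g (EuclideanSpace.single i t) = Complex.exp (bi * t) := by
    intro i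
    apply hom_exp' (fun t => g (EuclideanSpace.single i t))
    · exact hgc.comp (hconts i)
    · show g (EuclideanSpace.single i 0) = 1
      rw [hzero i]; exact hg0
    · intro s t
      show g (EuclideanSpace.single i (s + t)) =
        g (EuclideanSpace.single i s) * g (EuclideanSpace.single i t)
      rw [hadd i s t, ← hgmul]
  obtain ⟨b0, hb0⟩ := hsingle_g 0
  obtain ⟨b1, hb1⟩ := hsingle_g 1
  have hdecomp : ∀ x : EuclideanSpace ℝ (Fin 2),
      x = EuclideanSpace.single 0 (x 0) + EuclideanSpace.single 1 (x 1) := by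
    intro x
    ext j
    fin_cases j <;> simp [EuclideanSpace.single_apply]
  have hgx : ∀ x : EuclideanSpace ℝ (Fin 2),
      g x = Complex.exp (b0 * x 0 + b1 * x 1) := by
    intro x
    conv_lhs => rw [hdecomp x]
    rw [← hgmul, hb0, hb1, ← Complex.exp_add]
  set C : ℂ := Complex.log (f 0) with hCdef
  have hfC : f 0 = Complex.exp C := (Complex.exp_log hf0).symm
  have hfeq : ∀ x : EuclideanSpace ℝ (Fin 2),
      f x = Complex.exp (A * ‖x‖ + (b0 * x 0 + b1 * x 1) + C) := by
    intro x
    have hee : Complex.exp (-(A * ‖x‖)) * Complex.exp (A * ‖x‖) = 1 := by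
      rw [← Complex.exp_add]; simp
    have h6 : g x * Complex.exp (A * ‖x‖) * f 0 = f x := by
      simp only [hgdef]
      calc f x * Complex.exp (-(A * ‖x‖)) * (f 0)⁻¹ * Complex.exp (A * ‖x‖) * f 0
          = f x * (Complex.exp (-(A * ‖x‖)) * Complex.exp (A * ‖x‖)) *
              ((f 0)⁻¹ * f 0) := by ring
        _ = f x := by rw [hee, inv_mul_cancel₀ hf0]; ring
    rw [← h6, hgx, hfC, ← Complex.exp_add, ← Complex.exp_add]
    congr 1
    ring
  have hsum2 : ∀ x : EuclideanSpace ℝ (Fin 2),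
      (∑ i, (![b0, b1]) i * (x i : ℂ)) = b0 * x 0 + b1 * x 1 := by
    intro x
    rw [Fin.sum_univ_two]
    simp
  refine ⟨A, C, ![b0, b1], fun x => by rw [hsum2 x]; exact hfeq x, ?_⟩
  intro t v hvt
  set r : ℝ := (t - ‖v‖) / 2 with hrdef2
  have hr : 0 ≤ r := by rw [hrdef2]; linarith
  have h1 := heq v (w r) (w (-r))
  have hwr : ‖w r‖ = r := by
    simp only [hwdef]; rw [hnorm]; exact abs_of_nonneg hr
  have hwrn : ‖w (-r)‖ = r := by
    simp only [hwdef]; rw [hnorm, abs_neg]; exact abs_of_nonneg hr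
  have hsum : v + w r + w (-r) = v := by
    have hz : w r + w (-r) = 0 := by
      simp only [hwdef]; rw [← hadd 0 r (-r)]; simp [hzero 0]
    rw [add_assoc, hz, add_zero]
  have hnorms : ‖v‖ + ‖w r‖ + ‖w (-r)‖ = t := by
    rw [hwr, hwrn, hrdef2]; ring
  rw [hnorms, hsum] at h1
  rw [← h1]
  have hwneg2 : w (-r) = -(w r) := by simp only [hwdef]; exact hneg 0 r
  rw [hwneg2, mul_assoc, R2 (w r), hwr]
  rw [hfeq v, hfC, hsum2 v, pow_two, ← Complex.exp_add, ← Complex.exp_add,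
    ← Complex.exp_add]
  congr 1
  rw [hAdef, hrdef2]
  push_cast
  ring
end

section
/- Define P : ℝ³ × ℝ³ → ℝ³ by P(x,y) = ((x·y - |x||y|)/(x·y + |x||y| + 2|y|²))·y and Q(x,y) = x + y - P(x,y), for linearly independent x, y. Then |P(x,y)| + |Q(x,y)| = |x| + |y| and P(x,y) + Q(x,y) = x + y. -/
/-!
Write `P = t • y` and `Q = x + (1 - t) • y`. By Cauchy–Schwarz `t ≤ 0`, so `‖P‖ = -t ‖y‖`, and the
formula for `t` says exactly `t (⟪x, y⟫ + ‖x‖‖y‖ + 2‖y‖²) = ⟪x, y⟫ - ‖x‖‖y‖`, which is the identity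
`‖x + (1 - t) • y‖² = (‖x‖ + (1 + t) ‖y‖)²`. Cauchy–Schwarz again shows `‖x‖ + (1 + t) ‖y‖ ≥ 0`,
so `‖Q‖ = ‖x‖ + (1 + t) ‖y‖` and the norms add up to `‖x‖ + ‖y‖`.
-/

open scoped RealInnerProductSpace

namespace EllipseMap

variable {E : Type*} [NormedAddCommGroup E] [InnerProductSpace ℝ E]

/-- The coefficient `t` with `P(x, y) = t • y`. -/
noncomputable def coeff (x y : E) : ℝ :=
  (⟪x, y⟫ - ‖x‖ * ‖y‖) / (⟪x, y⟫ + ‖x‖ * ‖y‖ + 2 * ‖y‖ ^ 2)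

lemma neg_norm_mul_norm_le_inner (x y : E) : -(‖x‖ * ‖y‖) ≤ ⟪x, y⟫ :=
  neg_le_of_abs_le (abs_real_inner_le_norm x y)

lemma denom_pos {x y : E} (hy : y ≠ 0) : 0 < ⟪x, y⟫ + ‖x‖ * ‖y‖ + 2 * ‖y‖ ^ 2 := by
  have := neg_norm_mul_norm_le_inner x y
  have : 0 < ‖y‖ ^ 2 := by positivity
  linarith

lemma coeff_nonpos (x y : E) : coeff x y ≤ 0 := by
  have := neg_norm_mul_norm_le_inner x y
  have : 0 ≤ ‖y‖ ^ 2 := by positivity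
  exact div_nonpos_of_nonpos_of_nonneg (by linarith [real_inner_le_norm x y]) (by linarith)

lemma coeff_mul_denom {x y : E} (hy : y ≠ 0) :
    coeff x y * (⟪x, y⟫ + ‖x‖ * ‖y‖ + 2 * ‖y‖ ^ 2) = ⟪x, y⟫ - ‖x‖ * ‖y‖ :=
  div_mul_cancel₀ _ (denom_pos hy).ne'

lemma norm_add_one_sub_coeff_smul {x y : E} (hy : y ≠ 0) :
    ‖x + (1 - coeff x y) • y‖ = ‖x‖ + (1 + coeff x y) * ‖y‖ := by
  set t := coeff x y
  have ht := coeff_mul_denom (x := x) hy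
  have hD := denom_pos (x := x) hy
  have hs := neg_norm_mul_norm_le_inner x y
  have hrhs : 0 ≤ ‖x‖ + (1 + t) * ‖y‖ := by
    have key : (‖x‖ + (1 + t) * ‖y‖) * (⟪x, y⟫ + ‖x‖ * ‖y‖ + 2 * ‖y‖ ^ 2)
        = (⟪x, y⟫ + ‖x‖ * ‖y‖) * (‖x‖ + 2 * ‖y‖) + 2 * ‖y‖ ^ 3 := by
      linear_combination ‖y‖ * ht
    have : 0 ≤ (⟪x, y⟫ + ‖x‖ * ‖y‖) * (‖x‖ + 2 * ‖y‖) + 2 * ‖y‖ ^ 3 := by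
      have : 0 ≤ ⟪x, y⟫ + ‖x‖ * ‖y‖ := by linarith
      positivity
    exact nonneg_of_mul_nonneg_left (key ▸ this) hD
  have hsq : ‖x + (1 - t) • y‖ ^ 2 = (‖x‖ + (1 + t) * ‖y‖) ^ 2 := by
    rw [norm_add_sq_real, real_inner_smul_right, norm_smul, Real.norm_eq_abs, mul_pow, sq_abs]
    linear_combination (-2 : ℝ) * ht
  exact (sq_eq_sq₀ (norm_nonneg _) hrhs).mp hsq

lemma norm_coeff_smul_add_norm_sub {x y : E} (hy : y ≠ 0) :
    ‖coeff x y • y‖ + ‖x + y - coeff x y • y‖ = ‖x‖ + ‖y‖ := by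
  have hQ : x + y - coeff x y • y = x + (1 - coeff x y) • y := by module
  rw [hQ, norm_add_one_sub_coeff_smul hy, norm_smul,
    Real.norm_eq_abs, abs_of_nonpos (coeff_nonpos x y)]
  ring

end EllipseMap

theorem ellipse_map_properties
    (x y : EuclideanSpace ℝ (Fin 3))
    (hli : LinearIndependent ℝ ![x, y])
    (P Q : EuclideanSpace ℝ (Fin 3))
    (hP : P = ((⟪x, y⟫ - ‖x‖ * ‖y‖) / (⟪x, y⟫ + ‖x‖ * ‖y‖ + 2 * ‖y‖^2)) • y)
    (hQ : Q = x + y - P) :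
    ‖P‖ + ‖Q‖ = ‖x‖ + ‖y‖ ∧ P + Q = x + y := by
  have hy : y ≠ 0 := by simpa using hli.ne_zero 1
  subst hQ
  refine ⟨?_, add_sub_cancel P (x + y)⟩
  exact hP ▸ EllipseMap.norm_coeff_smul_add_norm_sub hy
end

section
/- For t ∈ ℝ and x ∈ ℝ² with t < -|x|, we have ∫_{ℝ²} exp(t|ξ| + x·ξ) dξ/|ξ| = 2π/√(t² - |x|²). -/
open MeasureTheory Real Set
open scoped RealInnerProductSpace

lemma radial_int (c : ℝ) (hc : c < 0) :
    ∫ r in Set.Ioi (0:ℝ), Real.exp (r * c) = (-c)⁻¹ := by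
  have hint : IntegrableOn (fun r : ℝ => Real.exp (r * c)) (Set.Ioi 0) := by
    have := exp_neg_integrableOn_Ioi 0 (b := -c) (by linarith)
    simpa [mul_comm, neg_mul] using this
  have hd : ∀ r ∈ Set.Ici (0:ℝ), HasDerivAt (fun r : ℝ => Real.exp (r * c) / c)
      (Real.exp (r * c)) r := by
    intro r _
    have := ((Real.hasDerivAt_exp (r * c)).comp r
      ((hasDerivAt_id r).mul_const c)).div_const c
    simpa [mul_comm, mul_div_assoc, mul_div_cancel_left₀ _ hc.ne] using this
  have := integral_Ioi_of_hasDerivAt_of_tendsto' (m := 0) hd hint ?_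
  · rw [this]; simp [inv_neg]
  · have h1 : Filter.Tendsto (fun r : ℝ => r * c) Filter.atTop Filter.atBot :=
      Filter.Tendsto.atTop_mul_const_of_neg hc Filter.tendsto_id
    simpa using (Real.tendsto_exp_atBot.comp h1).div_const c

lemma quad_int (c d : ℝ) (hc : 0 < c) (hd : 0 < d) :
    ∫ u : ℝ, (c + d * u ^ 2)⁻¹ = π / Real.sqrt (c * d) := by
  have hs : 0 < Real.sqrt (d / c) := Real.sqrt_pos.2 (div_pos hd hc)
  have h1 : ∀ u : ℝ, (c + d * u ^ 2)⁻¹ = c⁻¹ * (1 + (Real.sqrt (d / c) * u) ^ 2)⁻¹ := by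
    intro u
    rw [mul_pow, Real.sq_sqrt (div_pos hd hc).le]
    rw [← mul_inv]; congr 1; field_simp
  simp_rw [h1]
  rw [MeasureTheory.integral_const_mul]
  have := MeasureTheory.Measure.integral_comp_mul_left (fun y : ℝ => (1 + y ^ 2)⁻¹) (Real.sqrt (d / c))
  rw [this, integral_univ_inv_one_add_sq, smul_eq_mul]
  rw [abs_of_nonneg (by positivity)]
  rw [Real.sqrt_div' _ ?_] <;> try positivity
  · field_simp [Real.sqrt_mul hc.le]
    rw [Real.sqrt_mul hc.le, ← mul_assoc, Real.mul_self_sqrt hc.le]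

lemma angular_int (a b : ℝ) (hb : 0 ≤ b) (hab : b < a) :
    ∫ θ in Set.Ioo (-π) π, (a + b * Real.cos θ)⁻¹ = 2 * π / Real.sqrt (a ^ 2 - b ^ 2) := by
  have ha : 0 < a := lt_of_le_of_lt hb hab
  have himg : (fun u : ℝ => 2 * Real.arctan u) '' Set.univ = Set.Ioo (-π) π := by
    rw [Set.image_univ]
    have : Set.range (fun u : ℝ => 2 * Real.arctan u)
        = (fun y : ℝ => 2 * y) '' Set.range Real.arctan := by
      rw [← Set.range_comp]; rfl
    rw [this, Real.range_arctan]
    ext y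
    simp only [Set.mem_image, Set.mem_Ioo]
    constructor
    · rintro ⟨z, ⟨h1, h2⟩, rfl⟩; constructor <;> linarith
    · rintro ⟨h1, h2⟩; exact ⟨y / 2, ⟨by linarith, by linarith⟩, by ring⟩
  have hderiv : ∀ u ∈ Set.univ, HasDerivWithinAt (fun u : ℝ => 2 * Real.arctan u)
      (2 * (1 + u ^ 2)⁻¹) Set.univ u := by
    intro u _
    simpa [hasDerivWithinAt_univ, one_div] using (Real.hasDerivAt_arctan u).const_mul 2
  have hinj : Set.InjOn (fun u : ℝ => 2 * Real.arctan u) Set.univ := by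
    intro u _ v _ h
    exact Real.arctan_injective (by dsimp at h; linarith)
  have := integral_image_eq_integral_abs_deriv_smul MeasurableSet.univ hderiv hinj
    (fun θ => (a + b * Real.cos θ)⁻¹)
  rw [himg] at this
  rw [this, MeasureTheory.setIntegral_univ]
  have hcos : ∀ u : ℝ, Real.cos (2 * Real.arctan u) = (1 - u ^ 2) / (1 + u ^ 2) := by
    intro u
    have h1 : (0:ℝ) < 1 + u ^ 2 := by positivity
    rw [Real.cos_two_mul, Real.cos_arctan]
    rw [div_pow, one_pow, Real.sq_sqrt h1.le]
    field_simp
    ring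
  have key : ∀ u : ℝ, |2 * (1 + u ^ 2)⁻¹| • (a + b * Real.cos (2 * Real.arctan u))⁻¹
      = 2 * ((a + b) + (a - b) * u ^ 2)⁻¹ := by
    intro u
    have h1 : (0:ℝ) < 1 + u ^ 2 := by positivity
    rw [hcos u, smul_eq_mul, abs_of_pos (by positivity)]
    have h2 : a + b * ((1 - u ^ 2) / (1 + u ^ 2)) = ((a + b) + (a - b) * u ^ 2) / (1 + u ^ 2) := by
      field_simp; ring
    rw [h2, inv_div, div_eq_mul_inv]
    rw [show 2 * (1 + u ^ 2)⁻¹ * ((1 + u ^ 2) * (a + b + (a - b) * u ^ 2)⁻¹)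
      = ((1 + u ^ 2)⁻¹ * (1 + u ^ 2)) * (2 * (a + b + (a - b) * u ^ 2)⁻¹) by ring,
      inv_mul_cancel₀ h1.ne', one_mul]
  simp_rw [key]
  rw [MeasureTheory.integral_const_mul, quad_int (a + b) (a - b) (by linarith) (by linarith)]
  rw [show (a + b) * (a - b) = a ^ 2 - b ^ 2 by ring]
  ring

lemma angular_shift (a b φ : ℝ) :
    ∫ θ in Set.Ioo (-π) π, (a + b * Real.cos (θ - φ))⁻¹
      = ∫ θ in Set.Ioo (-π) π, (a + b * Real.cos θ)⁻¹ := by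
  have hper : Function.Periodic (fun θ : ℝ => (a + b * Real.cos θ)⁻¹) (2 * π) := by
    intro θ; simp [Real.cos_add_two_pi]
  have h2 := hper.intervalIntegral_add_eq (-π - φ) (-π)
  rw [show -π - φ + 2 * π = π - φ by ring, show -π + 2 * π = π by ring] at h2
  rw [← MeasureTheory.integral_Ioc_eq_integral_Ioo, ← MeasureTheory.integral_Ioc_eq_integral_Ioo,
    ← intervalIntegral.integral_of_le (by linarith [Real.pi_pos] : -π ≤ π),
    ← intervalIntegral.integral_of_le (by linarith [Real.pi_pos] : -π ≤ π)]
  rw [intervalIntegral.integral_comp_sub_right (fun θ => (a + b * Real.cos θ)⁻¹) φ]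
  exact h2

theorem wave_2d_kernel_integral
    (t : ℝ) (x : EuclideanSpace ℝ (Fin 2)) (ht : t < -‖x‖) :
    (∫ ξ : EuclideanSpace ℝ (Fin 2),
        Real.exp (t * ‖ξ‖ + ⟪x, ξ⟫) / ‖ξ‖)
      = 2 * Real.pi / Real.sqrt (t^2 - ‖x‖^2) := by
  -- choose angle φ with x = ‖x‖ (cos φ, sin φ)
  obtain ⟨φ, hφ1, hφ2⟩ : ∃ φ, x 0 = ‖x‖ * Real.cos φ ∧ x 1 = ‖x‖ * Real.sin φ := by
    have hx_norm : ‖x‖ = Real.sqrt ((x 0) ^ 2 + (x 1) ^ 2) := by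
      rw [EuclideanSpace.norm_eq]; simp [Fin.sum_univ_two, sq_abs]
    rcases eq_or_ne x 0 with rfl | hx
    · exact ⟨0, by simp, by simp⟩
    · set z : ℂ := ⟨x 0, x 1⟩ with hz
      have hzabs : ‖z‖ = ‖x‖ := by
        rw [Complex.norm_def, Complex.normSq_mk, hx_norm]; ring_nf
      have hz0 : z ≠ 0 := by
        intro h
        apply hx
        have : ‖z‖ = 0 := by rw [h]; simp
        rw [hzabs] at this
        exact norm_eq_zero.mp this
      refine ⟨Complex.arg z, ?_, ?_⟩
      · rw [Complex.cos_arg hz0, hzabs]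
        field_simp [norm_ne_zero_iff.mpr hx]; rfl
      · rw [Complex.sin_arg, hzabs]
        field_simp [norm_ne_zero_iff.mpr hx]; rfl
  have hxnn : (0:ℝ) ≤ ‖x‖ := norm_nonneg x
  -- step 1: transfer to ℝ × ℝ
  have step1 : (∫ ξ : EuclideanSpace ℝ (Fin 2), Real.exp (t * ‖ξ‖ + ⟪x, ξ⟫) / ‖ξ‖)
      = ∫ p : ℝ × ℝ, Real.exp (t * Real.sqrt (p.1^2 + p.2^2) + (x 0 * p.1 + x 1 * p.2))
          / Real.sqrt (p.1^2 + p.2^2) := by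
    let e : EuclideanSpace ℝ (Fin 2) ≃ᵐ ℝ × ℝ :=
      (MeasurableEquiv.toLp 2 (Fin 2 → ℝ)).symm.trans (MeasurableEquiv.finTwoArrow)
    have hmp : MeasurePreserving e.symm volume volume :=
      ((MeasureTheory.volume_preserving_finTwoArrow ℝ).comp
        (EuclideanSpace.volume_preserving_symm_measurableEquiv_toLp (Fin 2))).symm e
    rw [← hmp.integral_comp e.symm.measurableEmbedding
      (fun ξ : EuclideanSpace ℝ (Fin 2) => Real.exp (t * ‖ξ‖ + ⟪x, ξ⟫) / ‖ξ‖)]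
    congr 1
    ext p
    have h0 : (e.symm p) 0 = p.1 := rfl
    have h1 : (e.symm p) 1 = p.2 := rfl
    have hnorm : ‖e.symm p‖ = Real.sqrt (p.1 ^ 2 + p.2 ^ 2) := by
      rw [EuclideanSpace.norm_eq]
      simp [Fin.sum_univ_two, h0, h1, sq_abs]
    have hinner : ⟪x, e.symm p⟫ = x 0 * p.1 + x 1 * p.2 := by
      simp [PiLp.inner_apply, Fin.sum_univ_two, h0, h1, RCLike.inner_apply]; ring
    rw [hnorm, hinner]
  rw [step1]
  -- step 2: polar coordinates
  rw [← integral_comp_polarCoord_symm]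
  have hpt : Set.EqOn
      (fun p : ℝ × ℝ => p.1 • ((fun q : ℝ × ℝ =>
        Real.exp (t * Real.sqrt (q.1^2 + q.2^2) + (x 0 * q.1 + x 1 * q.2))
          / Real.sqrt (q.1^2 + q.2^2)) (polarCoord.symm p)))
      (fun p : ℝ × ℝ => Real.exp (p.1 * (t + ‖x‖ * Real.cos (p.2 - φ))))
      polarCoord.target := by
    rintro ⟨r, θ⟩ hp
    have hr : 0 < r := hp.1
    have hsq : (r * Real.cos θ) ^ 2 + (r * Real.sin θ) ^ 2 = r ^ 2 := by
      rw [mul_pow, mul_pow, ← mul_add, Real.cos_sq_add_sin_sq, mul_one]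
    simp only [polarCoord, OpenPartialHomeomorph.coe_mk_symm, PartialEquiv.coe_symm_mk]
    rw [hsq, Real.sqrt_sq hr.le]
    have harg : t * r + (x 0 * (r * Real.cos θ) + x 1 * (r * Real.sin θ))
        = r * (t + ‖x‖ * Real.cos (θ - φ)) := by
      rw [hφ1, hφ2, Real.cos_sub]; ring
    rw [harg, smul_eq_mul, mul_div_cancel₀ _ hr.ne']
  rw [MeasureTheory.setIntegral_congr_fun polarCoord.open_target.measurableSet hpt]
  -- step 3: Fubini
  have htgt : polarCoord.target = Set.Ioi (0:ℝ) ×ˢ Set.Ioo (-π) π := rfl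
  rw [htgt, Measure.volume_eq_prod, ← Measure.prod_restrict]
  have hc_neg : ∀ θ : ℝ, t + ‖x‖ * Real.cos (θ - φ) < 0 := by
    intro θ
    have h1 : ‖x‖ * Real.cos (θ - φ) ≤ ‖x‖ * 1 :=
      mul_le_mul_of_nonneg_left (Real.cos_le_one _) hxnn
    linarith
  have hInt : Integrable (fun p : ℝ × ℝ => Real.exp (p.1 * (t + ‖x‖ * Real.cos (p.2 - φ))))
      ((volume.restrict (Set.Ioi (0:ℝ))).prod (volume.restrict (Set.Ioo (-π) π))) := by
    have hf : Integrable (fun r : ℝ => Real.exp (r * (t + ‖x‖)))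
        (volume.restrict (Set.Ioi (0:ℝ))) := by
      have := exp_neg_integrableOn_Ioi 0 (b := -(t + ‖x‖)) (by linarith)
      simpa [mul_comm, neg_mul, neg_neg, IntegrableOn] using this
    have hg : Integrable (fun _ : ℝ => (1:ℝ)) (volume.restrict (Set.Ioo (-π) π)) :=
      integrableOn_const measure_Ioo_lt_top.ne
    refine Integrable.mono' (hf.mul_prod hg) ?_ ?_
    · have : Continuous fun p : ℝ × ℝ => Real.exp (p.1 * (t + ‖x‖ * Real.cos (p.2 - φ))) := by
        fun_prop
      exact this.aestronglyMeasurable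
    · rw [Measure.prod_restrict]
      filter_upwards [ae_restrict_mem (measurableSet_Ioi.prod measurableSet_Ioo)] with p hp
      have hr : (0:ℝ) < p.1 := hp.1
      have h1 : ‖x‖ * Real.cos (p.2 - φ) ≤ ‖x‖ * 1 :=
        mul_le_mul_of_nonneg_left (Real.cos_le_one _) hxnn
      rw [Real.norm_eq_abs, Real.abs_exp, mul_one]
      exact Real.exp_le_exp.2 (mul_le_mul_of_nonneg_left (by linarith) hr.le)
  rw [MeasureTheory.integral_prod_symm _ hInt]
  -- step 4: radial integral
  have hrad : Set.EqOn
      (fun θ : ℝ => ∫ r in Set.Ioi (0:ℝ), Real.exp (r * (t + ‖x‖ * Real.cos (θ - φ))))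
      (fun θ : ℝ => (-t + ‖x‖ * Real.cos (θ - (φ + π)))⁻¹) (Set.Ioo (-π) π) := by
    intro θ _
    dsimp only
    rw [radial_int _ (hc_neg θ)]
    congr 1
    rw [show θ - (φ + π) = (θ - φ) - π by ring, Real.cos_sub_pi]
    ring
  rw [MeasureTheory.setIntegral_congr_fun measurableSet_Ioo hrad]
  rw [angular_shift (-t) ‖x‖ (φ + π), angular_int (-t) ‖x‖ hxnn (by linarith)]
  rw [show (-t) ^ 2 = t ^ 2 by ring]
end
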